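/- arXiv:2501.08854 — 14 statements merged into one kernel-verified Lean document; each statement's English description precedes it below -/
import Mathlib

section
/- Let n ≥ 3. Then the Diophantine equation (n−1)·X² − t·Y² = 1 has no solutions in integers X, Y. -/
/-- Case w < 0 of the descent: yields a negative-Pell solution contradicting minimality. -/
lemma caseA (n t a b X Y w q : ℤ) (hn : 2 ≤ n) (ht : 2 ≤ t)
    (ha : 0 < a) (hb : 0 < b)
    (hab : a ^ 2 - t * (n - 1) * b ^ 2 = -1)
    (hmin : ∀ a' b' : ℤ, 0 < a' → 0 < b' →
      a' ^ 2 - t * (n - 1) * b' ^ 2 = -1 → a ≤ a')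
    (hX : 0 < X) (hY : 0 < Y) (hq : 0 < q) (hw : w < 0)
    (hXY : (n - 1) * X ^ 2 - t * Y ^ 2 = 1)
    (hw1 : (n - 1) * w ^ 2 - t * q ^ 2 = -1)
    (hv0 : q * X - w * Y = b) : False := by
  have hnorm : ((n-1)*w*X + t*q*Y)^2 - t*(n-1)*(q*X + w*Y)^2 = -1 := by
    linear_combination ((n-1)*X^2 - t*Y^2) * hw1 - hXY
  set u := (n-1)*w*X + t*q*Y with hudef
  set v := q*X + w*Y with hvdef
  have hvne : v ≠ 0 := by
    intro h0; rw [h0] at hnorm; nlinarith [sq_nonneg u]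
  have h1 : 1 ≤ v^2 := by rcases hvne.lt_or_gt with h | h <;> nlinarith
  have hune : u ≠ 0 := by
    intro h0; rw [h0] at hnorm
    have hD2 : 2 ≤ t*(n-1) := by nlinarith
    nlinarith [hD2, h1]
  have hau := hmin |u| |v| (abs_pos.mpr hune) (abs_pos.mpr hvne)
    (by rw [sq_abs, sq_abs]; exact hnorm)
  have hu2 : a^2 ≤ u^2 := by
    have h2 := pow_le_pow_left₀ ha.le hau 2
    rwa [sq_abs] at h2
  have hD : (0:ℤ) < t * (n-1) := mul_pos (by linarith) (by linarith)
  have hv2 : b^2 ≤ v^2 := by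
    have h3 : t*(n-1)*b^2 ≤ t*(n-1)*v^2 := by linarith
    exact le_of_mul_le_mul_left h3 hD
  have hbv : b ≤ |v| := by
    by_contra hcon
    push_neg at hcon
    have h4 := pow_lt_pow_left₀ hcon (abs_nonneg v) two_ne_zero
    rw [sq_abs] at h4
    linarith
  have hwY : w * Y < 0 := mul_neg_of_neg_of_pos hw hY
  have hqX : 0 < q * X := mul_pos hq hX
  rcases abs_cases v with ⟨heq, _⟩ | ⟨heq, _⟩
  · rw [heq, hvdef] at hbv
    linarith
  · rw [heq, hvdef] at hbv
    linarith

/-- Case w > 0 of the descent: yields a strictly smaller positive solution. -/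
lemma caseB (n t a b X w q : ℤ) (hn3 : 3 ≤ n) (ht : 2 ≤ t)
    (ha : 0 < a) (hb : 0 < b)
    (hab : a ^ 2 - t * (n - 1) * b ^ 2 = -1)
    (hX : 0 < X) (hq : 0 < q) (hw : 0 < w)
    (hw1 : (n - 1) * w ^ 2 - t * q ^ 2 = -1)
    (hsum : t * b * q + a * w = X) :
    ∃ X' Y' : ℤ, 0 < X' ∧ 0 < Y' ∧ (n - 1) * X' ^ 2 - t * Y' ^ 2 = 1 ∧ X' < X := by
  have hnorm0 : (n-1)*(t*b*q - a*w)^2 - t*((n-1)*b*w - a*q)^2 = 1 := by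
    linear_combination ((n-1)*w^2 - t*q^2) * hab - hw1
  have h2 : (t*b*q - a*w) * X = t*b^2 + w^2 := by
    rw [← hsum]; linear_combination (-(t*b^2)) * hw1 - w^2 * hab
  have hQ : 0 < t*b^2 + w^2 := by
    have := mul_pos (show (0:ℤ) < t by linarith) (mul_pos hb hb)
    nlinarith [sq_nonneg w]
  have hX' : 0 < t*b*q - a*w := by nlinarith [h2, hX, hQ]
  have hlt : t*b*q - a*w < X := by
    have := mul_pos ha hw
    linarith
  have hY0 : (n-1)*b*w - a*q ≠ 0 := by
    intro h0
    rw [h0] at hnorm0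
    nlinarith [hX', sq_nonneg (t*b*q - a*w - 1), sq_nonneg (t*b*q - a*w)]
  exact ⟨t*b*q - a*w, |(n-1)*b*w - a*q|, hX', abs_pos.mpr hY0,
    by rw [sq_abs]; exact hnorm0, hlt⟩

/-- Under the standing hypotheses (n ≥ 2, t ≥ 2, t(n−1) not a square,
(a,b) the minimal positive solution of the negative Pell equation X² − t(n−1)Y² = −1),
if moreover n ≥ 3, then the equation (n−1)X² − tY² = 1 has no integer solutions. -/
theorem stmt_0 (n t a b : ℤ) (hn : 2 ≤ n) (ht : 2 ≤ t)
    (hnsq : ¬ ∃ k : ℤ, k ^ 2 = t * (n - 1))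
    (ha : 0 < a) (hb : 0 < b)
    (hab : a ^ 2 - t * (n - 1) * b ^ 2 = -1)
    (hmin : ∀ a' b' : ℤ, 0 < a' → 0 < b' →
      a' ^ 2 - t * (n - 1) * b' ^ 2 = -1 → a ≤ a')
    (hn3 : 3 ≤ n) :
    ¬ ∃ X Y : ℤ, (n - 1) * X ^ 2 - t * Y ^ 2 = 1 := by
  rintro ⟨X, Y, hXY⟩
  -- descent step: every positive solution yields a strictly smaller one
  have key : ∀ Xp Yp : ℤ, 0 < Xp → 0 < Yp → (n-1)*Xp^2 - t*Yp^2 = 1 →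
      ∃ X' Y' : ℤ, 0 < X' ∧ 0 < Y' ∧ (n-1)*X'^2 - t*Y'^2 = 1 ∧ X' < Xp := by
    intro Xp Yp hXp hYp hE
    have hq : 0 < (n-1)*b*Xp - a*Yp := by
      have h1 : ((n-1)*b*Xp - a*Yp) * ((n-1)*b*Xp + a*Yp) = (n-1)*b^2 + Yp^2 := by
        linear_combination ((n-1)*b^2) * hE - Yp^2 * hab
      have hP : 0 < (n-1)*b*Xp + a*Yp := by
        have := mul_pos (mul_pos (show (0:ℤ) < n-1 by linarith) hb) hXp
        have := mul_pos ha hYp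
        linarith
      have hQ : 0 < (n-1)*b^2 + Yp^2 := by
        have := mul_pos (show (0:ℤ) < n-1 by linarith) (mul_pos hb hb)
        nlinarith [sq_nonneg Yp]
      nlinarith [h1, hP, hQ]
    have hw1 : (n-1)*(t*b*Yp - a*Xp)^2 - t*((n-1)*b*Xp - a*Yp)^2 = -1 := by
      linear_combination ((n-1)*Xp^2 - t*Yp^2) * hab - hE
    have hv0 : ((n-1)*b*Xp - a*Yp)*Xp - (t*b*Yp - a*Xp)*Yp = b := by
      linear_combination b * hE
    rcases lt_trichotomy (t*b*Yp - a*Xp) 0 with hwneg | hwzero | hwpos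
    · exact (caseA n t a b Xp Yp (t*b*Yp - a*Xp) ((n-1)*b*Xp - a*Yp)
        hn ht ha hb hab hmin hXp hYp hq hwneg hE hw1 hv0).elim
    · exfalso
      rw [hwzero] at hw1
      nlinarith [hq, mul_pos hq hq]
    · have hsum : t*b*((n-1)*b*Xp - a*Yp) + a*(t*b*Yp - a*Xp) = Xp := by
        linear_combination (-Xp) * hab
      exact caseB n t a b Xp (t*b*Yp - a*Xp) ((n-1)*b*Xp - a*Yp)
        hn3 ht ha hb hab hXp hq hwpos hw1 hsum
  -- infinite descent via induction on a natural bound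
  have main : ∀ m : ℕ, ∀ Xp Yp : ℤ, Xp ≤ (m:ℤ) → 0 < Xp → 0 < Yp →
      (n-1)*Xp^2 - t*Yp^2 = 1 → False := by
    intro m
    induction m with
    | zero => intro Xp Yp h1 h2 _ _; omega
    | succ k ih =>
      intro Xp Yp h1 h2 h3 h4
      obtain ⟨X', Y', hX', hY', heq', hlt⟩ := key Xp Yp h2 h3 h4
      exact ih X' Y' (by omega) hX' hY' heq'
  -- produce a positive solution from the given one
  have hX0 : X ≠ 0 := by
    intro h0; rw [h0] at hXY; nlinarith [sq_nonneg Y]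
  have hY0 : Y ≠ 0 := by
    intro h0; rw [h0] at hXY
    have hX1 : 1 ≤ X^2 := by rcases hX0.lt_or_gt with h | h <;> nlinarith
    nlinarith [hX1, sq_nonneg X]
  have h1 : (0:ℤ) < |X| := abs_pos.mpr hX0
  have h2 : (0:ℤ) < |Y| := abs_pos.mpr hY0
  have h3 : (n-1)*|X|^2 - t*|Y|^2 = 1 := by rw [sq_abs, sq_abs]; exact hXY
  exact main (|X|).toNat |X| |Y|
    (by rw [Int.toNat_of_nonneg (abs_nonneg X)]) h1 h2 h3
end

section
/- The pair (2a²+1, 2ab) is the minimal positive solution of the Pell equation X² − t(n−1)·Y² = 1: one has (2a²+1)² − t(n−1)·(2ab)² = 1, and every pair of integers (X, Y) with X² − t(n−1)·Y² = 1 and Y ≠ 0 satisfies |X| ≥ 2a²+1 and |Y| ≥ 2ab. -/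
set_option maxHeartbeats 1000000


/-- (2a²+1, 2ab) is the minimal positive solution of X² − t(n−1)Y² = 1. -/
theorem stmt_1 (n t a b : ℤ) (hn : 2 ≤ n) (ht : 2 ≤ t)
    (hnsq : ¬ ∃ k : ℤ, k ^ 2 = t * (n - 1))
    (ha : 0 < a) (hb : 0 < b)
    (hab : a ^ 2 - t * (n - 1) * b ^ 2 = -1)
    (hmin : ∀ a' b' : ℤ, 0 < a' → 0 < b' →
      a' ^ 2 - t * (n - 1) * b' ^ 2 = -1 → a ≤ a') :
    (2 * a ^ 2 + 1) ^ 2 - t * (n - 1) * (2 * a * b) ^ 2 = 1 ∧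
    ∀ X Y : ℤ, X ^ 2 - t * (n - 1) * Y ^ 2 = 1 → Y ≠ 0 →
      2 * a ^ 2 + 1 ≤ |X| ∧ 2 * a * b ≤ |Y| := by
  have hd2 : 2 ≤ t * (n - 1) := by nlinarith
  have hdb : t * (n - 1) * b ^ 2 = a ^ 2 + 1 := by linarith
  refine ⟨by linear_combination (4 * a ^ 2) * hab, ?_⟩
  intro X Y hXY hY
  set x := |X| with hxdef
  set y := |Y| with hydef
  have hx2 : x ^ 2 = X ^ 2 := sq_abs X
  have hy2 : y ^ 2 = Y ^ 2 := sq_abs Y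
  have hy1 : 1 ≤ y := Int.one_le_abs hY
  have hy0 : 0 ≤ y := abs_nonneg Y
  have hx0' : 0 ≤ x := abs_nonneg X
  have heq : x ^ 2 - t * (n - 1) * y ^ 2 = 1 := by rw [hx2, hy2]; exact hXY
  have hx0 : 0 < x := by nlinarith
  have hq : 0 < b * x - a * y := by
    nlinarith [mul_pos hb hx0, mul_nonneg ha.le hy0, sq_nonneg (b * x - a * y),
      sq_nonneg (b * x + a * y)]
  set p := t * (n - 1) * b * y - a * x with hpdef
  set q := b * x - a * y with hqdef
  have hpq : p ^ 2 - t * (n - 1) * q ^ 2 = -1 := by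
    rw [hpdef, hqdef]
    linear_combination (a ^ 2 - t * (n - 1) * b ^ 2) * heq + hab
  have hp : p ≠ 0 := by
    intro h
    rw [h] at hpq
    nlinarith
  have hap := hmin |p| q (abs_pos.mpr hp) hq (by rw [sq_abs]; exact hpq)
  have hap2 : a ^ 2 ≤ p ^ 2 := by
    have hsp := sq_abs p
    nlinarith [abs_nonneg p]
  have hbq2 : b ^ 2 ≤ q ^ 2 := by nlinarith
  have hbq : b ≤ q := by nlinarith
  have h1 : a * y + b ≤ b * x := by linarith
  have h2 : (a * y + b) ^ 2 ≤ (b * x) ^ 2 :=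
    pow_le_pow_left₀ (by positivity) h1 2
  have h3 : b ^ 2 * x ^ 2 = b ^ 2 * (t * (n - 1) * y ^ 2) + b ^ 2 := by
    linear_combination b ^ 2 * heq
  have h4 : b ^ 2 * (t * (n - 1) * y ^ 2) = (a ^ 2 + 1) * y ^ 2 := by
    linear_combination y ^ 2 * hdb
  have h5 : 2 * (a * b) * y ≤ y * y := by nlinarith [h2, h3, h4]
  have hy2ab : 2 * a * b ≤ y := by
    have := le_of_mul_le_mul_right h5 (by linarith : (0:ℤ) < y)
    linarith
  refine ⟨?_, hy2ab⟩
  have h6 : (2 * a ^ 2 + 1) ^ 2 ≤ x ^ 2 := by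
    nlinarith [mul_le_mul hy2ab hy2ab (by positivity : (0:ℤ) ≤ 2 * a * b) hy0, hdb, heq, hd2]
  nlinarith [h6, hx0, sq_nonneg (x - (2 * a ^ 2 + 1))]
end

section
/- The matrix M satisfies: (1) M² is the identity matrix; (2) M·vₙ = vₙ where vₙ = (1, 0, 1−n); (3) M preserves the Mukai pairing, i.e. ⟨M·v, M·w⟩ = ⟨v, w⟩ for all v, w ∈ ℤ³; and (4) M maps the sublattice vₙ^⊥ = {(r, m, s) ∈ ℤ³ : s = (n−1)·r} to itself. -/
/-- The matrix M is an involution fixing vₙ = (1,0,1−n), preserving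
the Mukai pairing ⟨(r₁,m₁,s₁),(r₂,m₂,s₂)⟩ = 2t m₁m₂ − r₁s₂ − r₂s₁, and preserving
the sublattice vₙ^⊥ = {(r,m,s) : s = (n−1)r}. -/
theorem stmt_2 (n t a b : ℤ) (hn : 2 ≤ n) (ht : 2 ≤ t)
    (hnsq : ¬ ∃ k : ℤ, k ^ 2 = t * (n - 1))
    (ha : 0 < a) (hb : 0 < b)
    (hab : a ^ 2 - t * (n - 1) * b ^ 2 = -1)
    (hmin : ∀ a' b' : ℤ, 0 < a' → 0 < b' →
      a' ^ 2 - t * (n - 1) * b' ^ 2 = -1 → a ≤ a')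
    (M : Matrix (Fin 3) (Fin 3) ℤ)
    (hM : M = !![-a ^ 2, -2 * t * a * b, -t * b ^ 2;
                 (n - 1) * a * b, 2 * a ^ 2 + 1, a * b;
                 -(n - 1) ^ 2 * t * b ^ 2, -2 * t * (n - 1) * a * b, -a ^ 2])
    (pair : (Fin 3 → ℤ) → (Fin 3 → ℤ) → ℤ)
    (hpair : pair = fun v w => 2 * t * v 1 * w 1 - v 0 * w 2 - w 0 * v 2)
    (vn : Fin 3 → ℤ) (hvn : vn = ![1, 0, 1 - n]) :
    M * M = 1 ∧
    M.mulVec vn = vn ∧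
    (∀ v w : Fin 3 → ℤ, pair (M.mulVec v) (M.mulVec w) = pair v w) ∧
    (∀ v : Fin 3 → ℤ, v 2 = (n - 1) * v 0 →
      (M.mulVec v) 2 = (n - 1) * (M.mulVec v) 0) := by
  subst hM hpair hvn
  refine ⟨?_, ?_, ?_, ?_⟩
  · ext i j
    fin_cases i <;> fin_cases j <;>
      simp [Matrix.mul_apply, Fin.sum_univ_three, Matrix.one_apply]
    · linear_combination (a ^ 2 - 1 - (n - 1) * t * b ^ 2) * hab
    · linear_combination (-2 * t * a * b) * hab
    · ring
    · linear_combination ((n - 1) * a * b) * hab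
    · linear_combination (4 * a ^ 2) * hab
    · linear_combination (a * b) * hab
    · ring
    · linear_combination (-2 * (n - 1) * t * a * b) * hab
    · linear_combination (a ^ 2 - 1 - (n - 1) * t * b ^ 2) * hab
  · funext i
    fin_cases i <;>
      simp [Matrix.mulVec, dotProduct, Fin.sum_univ_three]
    · linear_combination (-1 : ℤ) * hab
    · ring
    · linear_combination (n - 1) * hab
  · intro v w
    simp [Matrix.mulVec, dotProduct, Fin.sum_univ_three]
    linear_combination (((n - 1) * t * b ^ 2 + 1 - a ^ 2) * (v 2 * w 0 + v 0 * w 2)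
      + 2 * t * a * b * (v 2 * w 1 + v 1 * w 2)
      + 2 * (n - 1) * t * a * b * (v 1 * w 0 + v 0 * w 1)
      + 8 * t * a ^ 2 * v 1 * w 1) * hab
  · intro v hv
    simp [Matrix.mulVec, dotProduct, Fin.sum_univ_three]
    linear_combination (t * (n - 1) * b ^ 2 - a ^ 2) * hv
end

section
/- Let x > 0 and y be real numbers. Then Z_{x,y}(M·v) = Z_{x,y}(v) holds for every v ∈ ℤ³ if and only if x = 1/(t·b) and y = −a/(t·b). -/
set_option maxHeartbeats 1000000 in
open Complex in
/-- The central charge Z_{x,y} is invariant under M if and only if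
x = 1/(tb) and y = −a/(tb). -/
theorem stmt_3 (n t a b : ℤ) (hn : 2 ≤ n) (ht : 2 ≤ t)
    (hnsq : ¬ ∃ k : ℤ, k ^ 2 = t * (n - 1))
    (ha : 0 < a) (hb : 0 < b)
    (hab : a ^ 2 - t * (n - 1) * b ^ 2 = -1)
    (hmin : ∀ a' b' : ℤ, 0 < a' → 0 < b' →
      a' ^ 2 - t * (n - 1) * b' ^ 2 = -1 → a ≤ a')
    (M : Matrix (Fin 3) (Fin 3) ℤ)
    (hM : M = !![-a ^ 2, -2 * t * a * b, -t * b ^ 2;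
                 (n - 1) * a * b, 2 * a ^ 2 + 1, a * b;
                 -(n - 1) ^ 2 * t * b ^ 2, -2 * t * (n - 1) * a * b, -a ^ 2])
    (x y : ℝ) (hx : 0 < x)
    (Z : (Fin 3 → ℤ) → ℂ)
    (hZ : Z = fun v =>
      ((2 * (t : ℝ) * y * (v 1 : ℝ) - (v 2 : ℝ) + (t : ℝ) * (x ^ 2 - y ^ 2) * (v 0 : ℝ) : ℝ) : ℂ) +
      ((2 * (t : ℝ) * x * ((v 1 : ℝ) - (v 0 : ℝ) * y) : ℝ) : ℂ) * Complex.I) :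
    (∀ v : Fin 3 → ℤ, Z (M.mulVec v) = Z v) ↔
      (x = 1 / ((t : ℝ) * (b : ℝ)) ∧ y = -(a : ℝ) / ((t : ℝ) * (b : ℝ))) := by
  subst hM hZ
  have ht0 : (0:ℝ) < (t:ℝ) := by exact_mod_cast lt_of_lt_of_le zero_lt_two ht
  have hb0 : (0:ℝ) < (b:ℝ) := by exact_mod_cast hb
  have ha0 : (0:ℝ) < (a:ℝ) := by exact_mod_cast ha
  have hn0 : (0:ℝ) < (n:ℝ) - 1 := by
    have : (2:ℝ) ≤ (n:ℝ) := by exact_mod_cast hn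
    linarith
  have key : (a:ℝ)^2 + 1 = (t:ℝ) * ((n:ℝ)-1) * (b:ℝ)^2 := by
    have h2 : a ^ 2 + 1 = t * (n - 1) * b ^ 2 := by linarith
    exact_mod_cast congrArg (fun z : ℤ => (z : ℝ)) h2
  have hn1 : ((n:ℝ)-1) = ((a:ℝ)^2+1)/((t:ℝ)*(b:ℝ)^2) := by
    field_simp
    linarith [key]
  constructor
  · intro h
    have h0 := h ![1,0,0]
    have h1 := h ![0,1,0]
    simp [Matrix.mulVec, dotProduct, Fin.sum_univ_three, -Complex.ofReal_sub,
      -Complex.ofReal_add, -Complex.ofReal_mul, -Complex.ofReal_neg] at h0 h1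
    have h0im := congrArg Complex.im h0
    have h1re := congrArg Complex.re h1
    simp only [Complex.add_im, Complex.add_re, Complex.ofReal_im, Complex.ofReal_re,
      Complex.mul_im, Complex.mul_re, Complex.I_re, Complex.I_im] at h0im h1re
    have h2 : 2*(t:ℝ)*x*(((n:ℝ)-1)*(a:ℝ)*(b:ℝ) + (a:ℝ)^2*y) = 2*(t:ℝ)*x*(-y) := by
      linear_combination h0im
    have e : ((n:ℝ)-1)*(a:ℝ)*(b:ℝ) + (a:ℝ)^2*y = -y :=
      mul_left_cancel₀ (by positivity) h2
    have hy : y = -(a:ℝ) / ((t:ℝ) * (b:ℝ)) := by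
      have h3 : (((n:ℝ)-1)*(b:ℝ)) * (y*((t:ℝ)*(b:ℝ))) = (((n:ℝ)-1)*(b:ℝ)) * (-(a:ℝ)) := by
        linear_combination e - y*key
      have h4 := mul_left_cancel₀ (show ((n:ℝ)-1)*(b:ℝ) ≠ 0 by positivity) h3
      field_simp
      linarith [h4]
    subst hy
    refine ⟨?_, rfl⟩
    have hx2 : x^2 = (1/((t:ℝ)*(b:ℝ)))^2 := by
      rw [hn1] at h1re
      field_simp at h1re ⊢
      have h9 : (-2*(a:ℝ)) * ((t:ℝ)^2*(b:ℝ)^2*x^2)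
          = (-2*(a:ℝ)) * 1 := by linear_combination h1re
      have h10 := mul_left_cancel₀ (mul_ne_zero (by norm_num) ha0.ne') h9
      linear_combination h10
    have h5 : (x - 1/((t:ℝ)*(b:ℝ)))*(x + 1/((t:ℝ)*(b:ℝ))) = 0 := by linear_combination hx2
    rcases mul_eq_zero.mp h5 with h6|h6
    · linarith
    · have h7 : 0 < 1/((t:ℝ)*(b:ℝ)) := by positivity
      linarith
  · rintro ⟨hx', hy'⟩ v
    subst hx' hy'
    have hmv : (!![-a ^ 2, -2 * t * a * b, -t * b ^ 2;
                 (n - 1) * a * b, 2 * a ^ 2 + 1, a * b;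
                 -(n - 1) ^ 2 * t * b ^ 2, -2 * t * (n - 1) * a * b, -a ^ 2]).mulVec v =
        ![-a^2 * v 0 + -2*t*a*b * v 1 + -t*b^2 * v 2,
          (n-1)*a*b * v 0 + (2*a^2+1) * v 1 + a*b * v 2,
          -(n-1)^2*t*b^2 * v 0 + -2*t*(n-1)*a*b * v 1 + -a^2 * v 2] := by
      funext i
      fin_cases i <;>
        simp [Matrix.mulVec, dotProduct, Fin.sum_univ_three]
    simp only [hmv, Matrix.cons_val_zero, Matrix.cons_val_one, Matrix.head_cons,
      Matrix.cons_val_two, Matrix.tail_cons]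
    rw [Complex.ext_iff]
    simp only [Complex.add_im, Complex.add_re, Complex.ofReal_im, Complex.ofReal_re,
      Complex.mul_im, Complex.mul_re, Complex.I_re, Complex.I_im]
    push_cast
    rw [hn1]
    constructor
    · field_simp
      ring
    · field_simp
      ring
end

section
/- If integers r, m, s satisfy a·r + t·b·m = 0, t·m² = r·s − 1 and r > 0, then (n−1)·r > s. -/
/-- If a·r + t·b·m = 0, t·m² = r·s − 1 and r > 0, then (n−1)·r > s. -/
theorem stmt_4 (n t a b : ℤ) (hn : 2 ≤ n) (ht : 2 ≤ t)
    (hnsq : ¬ ∃ k : ℤ, k ^ 2 = t * (n - 1))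
    (ha : 0 < a) (hb : 0 < b)
    (hab : a ^ 2 - t * (n - 1) * b ^ 2 = -1)
    (hmin : ∀ a' b' : ℤ, 0 < a' → 0 < b' →
      a' ^ 2 - t * (n - 1) * b' ^ 2 = -1 → a ≤ a')
    (r m s : ℤ) (h1 : a * r + t * b * m = 0) (h2 : t * m ^ 2 = r * s - 1)
    (hr : 0 < r) :
    s < (n - 1) * r := by
  have key : t * b ^ 2 * (r * ((n - 1) * r - s) + 1) = r ^ 2 := by
    linear_combination (a * r - t * b * m) * h1 + t * b ^ 2 * h2 - r ^ 2 * hab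
  have htb : 0 < t * b ^ 2 := by positivity
  have hpos : 0 < r * ((n - 1) * r - s) + 1 := by
    by_contra h
    push_neg at h
    nlinarith
  have hDge : 0 ≤ (n - 1) * r - s := by nlinarith
  rcases lt_or_eq_of_le hDge with h | h
  · linarith
  -- D = 0 case: derive contradiction
  exfalso
  have hkey0 : t * b ^ 2 = r ^ 2 := by linear_combination key + t * b ^ 2 * r * h
  have hbr : b ∣ r := by
    have : b ^ 2 ∣ r ^ 2 := ⟨t, by linarith⟩
    exact (Int.pow_dvd_pow_iff (two_ne_zero)).mp this
  obtain ⟨k, hk⟩ := hbr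
  have hb0 : (b : ℤ) ≠ 0 := ne_of_gt hb
  have htk : t = k ^ 2 := by
    have h2' : b ^ 2 * t = b ^ 2 * k ^ 2 := by rw [hk] at hkey0; linarith [hkey0]; 
    exact mul_left_cancel₀ (pow_ne_zero 2 hb0) h2'
  have hkpos : 0 < k := by
    rcases lt_trichotomy k 0 with hk0 | hk0 | hk0
    · exfalso; nlinarith
    · exfalso; rw [hk0] at htk; omega
    · exact hk0
  have ham : a = -(k * m) := by
    have hz : b * (k * (a + k * m)) = 0 := by
      have h1' := h1
      rw [hk, htk] at h1'
      linarith [h1']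
    rcases mul_eq_zero.mp hz with h3 | h3
    · exact absurd h3 hb0
    · rcases mul_eq_zero.mp h3 with h4 | h4
      · exact absurd h4 (ne_of_gt hkpos)
      · linarith
  have hk2 : 2 ≤ k ^ 2 := htk ▸ ht
  have hX : k ^ 2 * ((n - 1) * b ^ 2 - m ^ 2) = 1 := by
    rw [ham, htk] at hab; linarith [hab]
  rcases le_or_gt ((n - 1) * b ^ 2 - m ^ 2) 0 with hc | hc
  · nlinarith
  · have h1c : 1 ≤ (n - 1) * b ^ 2 - m ^ 2 := hc
    nlinarith
end

section
/- There exist no integers r, m, s and real number λ₀ ≥ 0 satisfying simultaneously: the wall equation a·((n−1)·r + s) = −2·(n−1)·(b·t + λ₀)·m, the condition s = (n−1)·r (i.e. ⟨w, vₙ⟩ = 0 for w = (r, m, s)), and r·s − t·m² = 1 (i.e. ⟨w, w⟩ = −2). Consequently the stability conditions σ_{λω₀,β₀}, λ ≥ 1, lie on no Brill–Noether wall with respect to vₙ. -/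
/-- Integer core of the argument: from the minimal negative Pell solution `(a,b)`,
a solution `(R,M)` of `(n-1)R² - tM² = 1` with `R,M > 0`, and the wall inequality
`btM ≤ aR`, derive a contradiction by Pell composition and minimality. -/
lemma stmt_6_core (n t a b R M : ℤ) (hn : 2 ≤ n) (ht : 2 ≤ t)
    (ha : 0 < a) (hb : 0 < b)
    (hab : a ^ 2 - t * (n - 1) * b ^ 2 = -1)
    (hmin : ∀ a' b' : ℤ, 0 < a' → 0 < b' →
      a' ^ 2 - t * (n - 1) * b' ^ 2 = -1 → a ≤ a')
    (hR : 0 < R) (hM : 0 < M)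
    (hP2 : (n - 1) * R ^ 2 - t * M ^ 2 = 1)
    (hkey : b * t * M ≤ a * R) : False := by
  have hn1 : (0:ℤ) < n - 1 := by linarith
  have hu : (2*t*M^2+1)^2 - t*(n-1)*(2*M*R)^2 = 1 := by
    linear_combination (-(4*t*M^2)) * hP2
  have hnorm : (a*(2*t*M^2+1) - b*(t*(n-1))*(2*M*R))^2
      - t*(n-1)*(a*(2*M*R) - b*(2*t*M^2+1))^2 = -1 := by
    linear_combination ((2*t*M^2+1)^2 - t*(n-1)*(2*M*R)^2) * hab - hu
  set p := a*(2*t*M^2+1) - b*(t*(n-1))*(2*M*R) with hp_def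
  set q := a*(2*M*R) - b*(2*t*M^2+1) with hq_def
  have hq0 : q ≠ 0 := by
    intro h
    rw [h] at hnorm
    nlinarith [sq_nonneg p]
  have h1q : 1 ≤ q ^ 2 := by
    rcases hq0.lt_or_gt with h | h <;> nlinarith
  have hp0 : p ≠ 0 := by
    intro h
    rw [h] at hnorm
    have h2 : (2:ℤ) ≤ t*(n-1) := by nlinarith
    nlinarith [mul_le_mul h2 h1q (by norm_num) (by linarith)]
  have habs : a ≤ |p| := by
    refine hmin |p| |q| (abs_pos.mpr hp0) (abs_pos.mpr hq0) ?_
    rw [sq_abs, sq_abs]; exact hnorm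
  rcases le_or_gt 0 p with hpos | hneg
  · -- p ≥ 0 : then aM ≥ b(n-1)R, multiply with hkey for contradiction
    rw [abs_of_nonneg hpos] at habs
    rw [hp_def] at habs
    have h6 : (b*((n-1)*R))*(2*t*M) ≤ (a*M)*(2*t*M) := by linarith
    have h5 : b*((n-1)*R) ≤ a*M :=
      le_of_mul_le_mul_right h6 (by positivity)
    have h7 : (b*t*M)*(b*((n-1)*R)) ≤ (a*R)*(a*M) :=
      mul_le_mul hkey h5 (le_of_lt (by positivity)) (le_of_lt (by positivity))
    have h8 : (a*R)*(a*M) = (t*(n-1)*b^2 - 1)*(R*M) := by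
      linear_combination (R*M) * hab
    have h9 : (b*t*M)*(b*((n-1)*R)) = t*(n-1)*b^2*(R*M) := by ring
    nlinarith [mul_pos hR hM]
  · -- p < 0 : then btM ≥ aR, so equality, forcing t = 1
    rw [abs_of_neg hneg] at habs
    rw [hp_def] at habs
    have hP2a : 2*a*((n-1)*R^2) = 2*a*(t*M^2+1) := by linear_combination 2*a*hP2
    have h6 : (a*R)*(2*(n-1)*R) ≤ (b*t*M)*(2*(n-1)*R) := by linarith
    have hge : a*R ≤ b*t*M := le_of_mul_le_mul_right h6 (by positivity)
    have heq : a*R = b*t*M := le_antisymm hge hkey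
    have hRt : R^2 = t*b^2 := by
      linear_combination (R^2)*hab + (t*b^2)*hP2 - (a*R + b*t*M)*heq
    have ha2 : a^2 = t*M^2 := by
      linear_combination hab + hP2 - (n-1)*hRt
    have hdvd : t*((n-1)*b^2 - M^2) = 1 := by
      linear_combination ha2 - hab
    have : t ≤ 1 := Int.le_of_dvd one_pos ⟨(n-1)*b^2 - M^2, hdvd.symm⟩
    linarith

/-- No Brill–Noether wall: there are no integers r, m, s and real
λ₀ ≥ 0 satisfying the wall equation, s = (n−1)r (⟨w,vₙ⟩ = 0) and rs − tm² = 1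
(⟨w,w⟩ = −2). -/
theorem stmt_6 (n t a b : ℤ) (hn : 2 ≤ n) (ht : 2 ≤ t)
    (hnsq : ¬ ∃ k : ℤ, k ^ 2 = t * (n - 1))
    (ha : 0 < a) (hb : 0 < b)
    (hab : a ^ 2 - t * (n - 1) * b ^ 2 = -1)
    (hmin : ∀ a' b' : ℤ, 0 < a' → 0 < b' →
      a' ^ 2 - t * (n - 1) * b' ^ 2 = -1 → a ≤ a') :
    ¬ ∃ (r m s : ℤ) (lam₀ : ℝ), 0 ≤ lam₀ ∧
      (a : ℝ) * (((n : ℝ) - 1) * (r : ℝ) + (s : ℝ)) =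
        -2 * ((n : ℝ) - 1) * ((b : ℝ) * (t : ℝ) + lam₀) * (m : ℝ) ∧
      s = (n - 1) * r ∧
      r * s - t * m ^ 2 = 1 := by
  rintro ⟨r, m, s, lam₀, hlam, hwall, hs, hpell⟩
  have hn1 : (0:ℤ) < n - 1 := by linarith
  -- the Pell-type equation in (r, m)
  have hP : (n - 1) * r ^ 2 - t * m ^ 2 = 1 := by
    have h := hpell
    rw [hs] at h
    linear_combination h
  -- simplify the wall equation
  have hs' : (s:ℝ) = ((n:ℝ) - 1) * r := by
    rw [hs]; push_cast; ring
  have hn1R : (0:ℝ) < (n:ℝ) - 1 := by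
    have : (2:ℝ) ≤ (n:ℝ) := by exact_mod_cast hn
    linarith
  have key : (a:ℝ) * r + ((b:ℝ)*(t:ℝ) + lam₀) * m = 0 := by
    have h2 : ((n:ℝ) - 1) * (2 * ((a:ℝ)*r + ((b:ℝ)*(t:ℝ) + lam₀)*m)) = 0 := by
      linear_combination hwall - (a:ℝ) * hs'
    have := mul_eq_zero.mp h2
    rcases this with h | h
    · exact absurd h (ne_of_gt hn1R)
    · linarith
  -- m ≠ 0
  have hm : m ≠ 0 := by
    rintro rfl
    push_cast at key
    have h0 : (a:ℝ) * r = 0 := by linarith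
    have ha' : (a:ℝ) ≠ 0 := ne_of_gt (by exact_mod_cast ha)
    have hr0 : (r:ℝ) = 0 := by
      rcases mul_eq_zero.mp h0 with h | h
      · exact absurd h ha'
      · exact h
    have : r = 0 := by exact_mod_cast hr0
    subst this
    simp at hP
  -- the key integer inequality a*r*m + b*t*m^2 ≤ 0
  have hineqR : (a:ℝ)*r*m + (b:ℝ)*(t:ℝ)*(m:ℝ)^2 ≤ 0 := by
    have h1 : (a:ℝ)*r*m + (b:ℝ)*(t:ℝ)*(m:ℝ)^2 = -(lam₀ * (m:ℝ)^2) := by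
      linear_combination (m:ℝ) * key
    have h2 : 0 ≤ lam₀ * (m:ℝ)^2 := mul_nonneg hlam (sq_nonneg _)
    linarith
  have hZ : a*r*m + b*t*m^2 ≤ 0 := by exact_mod_cast hineqR
  have h1m : 1 ≤ m ^ 2 := by
    rcases hm.lt_or_gt with h | h <;> nlinarith
  -- r*m < 0
  have hbt : (2:ℤ) ≤ b*t := by nlinarith
  have hbtm : (2:ℤ) ≤ b*t*m^2 := by nlinarith [mul_le_mul hbt h1m (by norm_num) (by linarith)]
  have hrmneg : r * m < 0 := by
    by_contra h
    push_neg at h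
    nlinarith [mul_nonneg ha.le h, hbtm]
  -- extract absolute values
  obtain ⟨R, M, hR, hM, hr2, hm2, hrm⟩ :
      ∃ R M : ℤ, 0 < R ∧ 0 < M ∧ r^2 = R^2 ∧ m^2 = M^2 ∧ r * m = -(R*M) := by
    rcases lt_trichotomy m 0 with h | h | h
    · refine ⟨r, -m, ?_, by linarith, by ring, by ring, by ring⟩
      nlinarith
    · exact absurd h hm
    · refine ⟨-r, m, ?_, h, by ring, by ring, by ring⟩
      nlinarith
  have hP2 : (n - 1) * R ^ 2 - t * M ^ 2 = 1 := by rw [← hr2, ← hm2]; exact hP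
  have hZ' : b*t*M^2 ≤ a*(R*M) := by
    have h : a*r*m + b*t*m^2 = -(a*(R*M)) + b*t*M^2 := by
      linear_combination a*hrm + b*t*hm2
    linarith
  have hkey : b*t*M ≤ a*R := by
    have h4 : (b*t*M)*M ≤ (a*R)*M := by
      calc (b*t*M)*M = b*t*M^2 := by ring
        _ ≤ a*(R*M) := hZ'
        _ = (a*R)*M := by ring
    exact le_of_mul_le_mul_right h4 hM
  exact stmt_6_core n t a b R M hn ht ha hb hab hmin hR hM hP2 hkey
end

section
/- There exist no integers r, m, s and real number λ₀ ≥ 0 satisfying simultaneously: the wall equation a·((n−1)·r + s) = −2·(n−1)·(b·t + λ₀)·m, the condition (n−1)·r − s = 1 (i.e. ⟨w, vₙ⟩ = 1 for w = (r, m, s)), and t·m² = r·s (i.e. ⟨w, w⟩ = 0). Consequently the stability conditions σ_{λω₀,β₀}, λ ≥ 1, lie on no Hilbert–Chow wall with respect to vₙ. -/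
set_option maxHeartbeats 1000000 in
/-- No Hilbert–Chow wall: there are no integers r, m, s and real
λ₀ ≥ 0 satisfying the wall equation, (n−1)r − s = 1 (⟨w,vₙ⟩ = 1) and tm² = rs
(⟨w,w⟩ = 0). -/
theorem stmt_7 (n t a b : ℤ) (hn : 2 ≤ n) (ht : 2 ≤ t)
    (hnsq : ¬ ∃ k : ℤ, k ^ 2 = t * (n - 1))
    (ha : 0 < a) (hb : 0 < b)
    (hab : a ^ 2 - t * (n - 1) * b ^ 2 = -1)
    (hmin : ∀ a' b' : ℤ, 0 < a' → 0 < b' →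
      a' ^ 2 - t * (n - 1) * b' ^ 2 = -1 → a ≤ a') :
    ¬ ∃ (r m s : ℤ) (lam₀ : ℝ), 0 ≤ lam₀ ∧
      (a : ℝ) * (((n : ℝ) - 1) * (r : ℝ) + (s : ℝ)) =
        -2 * ((n : ℝ) - 1) * ((b : ℝ) * (t : ℝ) + lam₀) * (m : ℝ) ∧
      (n - 1) * r - s = 1 ∧
      t * m ^ 2 = r * s := by
  rintro ⟨r, m, s, lam₀, hlam, hwall, hv, hw⟩
  set D : ℤ := t * (n - 1) with hD
  clear_value D
  have hD2 : 2 ≤ D := by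
    have h1 : 2 * 1 ≤ t * (n - 1) :=
      mul_le_mul ht (by linarith) (by norm_num) (by linarith)
    linarith [hD, h1]
  have hDpos : (0 : ℤ) < D := by linarith
  have hDb : D * b ^ 2 = a ^ 2 + 1 := by linarith
  -- Case m = 0
  by_cases hm : m = 0
  · subst hm
    have h0 : (a : ℝ) * (((n : ℝ) - 1) * r + s) = 0 := by
      rw [hwall]; push_cast; ring
    have ha0 : ((n : ℝ) - 1) * r + s = 0 := by
      rcases mul_eq_zero.mp h0 with h | h
      · exact absurd h (by exact_mod_cast ha.ne')
      · exact h
    have hZ : (n - 1) * r + s = 0 := by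
      have : (((n - 1) * r + s : ℤ) : ℝ) = 0 := by push_cast; linarith
      exact_mod_cast this
    have h2s : (2 : ℤ) * s = -1 := by linarith
    omega
  -- Case m ≠ 0
  have hmsq : 1 ≤ m ^ 2 := by rcases lt_or_gt_of_ne hm with h | h <;> nlinarith
  -- the wall inequality
  set X : ℤ := (n - 1) * r + s with hXdef
  clear_value X
  have hX2 : X ^ 2 = 4 * D * m ^ 2 + 1 := by
    rw [hXdef, hD]
    linear_combination ((n - 1) * r - s + 1) * hv - 4 * (n - 1) * hw
  have hAineq : (2 * D * b * m) ^ 2 ≤ (a * X) ^ 2 := by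
    have key : ((2 * D * b * m : ℤ) : ℝ) ^ 2 ≤ ((a * X : ℤ) : ℝ) ^ 2 := by
      have h1 : ((a : ℝ) * (((n : ℝ) - 1) * r + s)) ^ 2 =
          (2 * ((n : ℝ) - 1) * ((b : ℝ) * t + lam₀)) ^ 2 * (m : ℝ) ^ 2 := by
        rw [hwall]; ring
      have hn' : (1 : ℝ) ≤ (n : ℝ) - 1 := by
        have : (2 : ℝ) ≤ (n : ℝ) := by exact_mod_cast hn
        linarith
      have ht' : (2 : ℝ) ≤ (t : ℝ) := by exact_mod_cast ht
      have hb' : (1 : ℝ) ≤ (b : ℝ) := by exact_mod_cast hb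
      have hbt : (0 : ℝ) ≤ (b : ℝ) * (t : ℝ) := by nlinarith
      have hq : (0 : ℝ) ≤ 2 * ((b : ℝ) * (t : ℝ)) * lam₀ + lam₀ ^ 2 := by
        nlinarith [mul_nonneg hbt hlam, sq_nonneg lam₀]
      have hdiff : (0 : ℝ) ≤ 4 * ((n : ℝ) - 1) ^ 2 *
          (2 * ((b : ℝ) * (t : ℝ)) * lam₀ + lam₀ ^ 2) * (m : ℝ) ^ 2 :=
        mul_nonneg (mul_nonneg (by positivity) hq) (sq_nonneg _)
      have hid2 : (2 * ((n : ℝ) - 1) * ((b : ℝ) * t + lam₀)) ^ 2 * (m : ℝ) ^ 2 =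
          (2 * ((t : ℝ) * ((n : ℝ) - 1)) * (b : ℝ) * (m : ℝ)) ^ 2 +
          4 * ((n : ℝ) - 1) ^ 2 *
            (2 * ((b : ℝ) * (t : ℝ)) * lam₀ + lam₀ ^ 2) * (m : ℝ) ^ 2 := by
        ring
      push_cast [hXdef, hD]
      linarith [h1, hdiff, hid2]
    exact_mod_cast key
  have hkey : 4 * D * m ^ 2 ≤ a ^ 2 := by
    have e1 : (a * X) ^ 2 = a ^ 2 * (4 * D * m ^ 2 + 1) := by
      rw [mul_pow, hX2]
    have e2 : (2 * D * b * m) ^ 2 = 4 * D * m ^ 2 * (a ^ 2 + 1) := by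
      linear_combination 4 * D * m ^ 2 * hDb
    nlinarith [hAineq, e1, e2]
  -- Pell descent
  have hXne : X ≠ 0 := by
    intro h
    rw [h] at hX2
    nlinarith
  set x : ℤ := |X| with hxdef
  set y : ℤ := |2 * m| with hydef
  have hxpos : 0 < x := abs_pos.mpr hXne
  have hypos : 0 < y := abs_pos.mpr (by simpa using hm)
  have hx2 : x ^ 2 = X ^ 2 := sq_abs X
  have hy2 : y ^ 2 = 4 * m ^ 2 := by rw [hydef, sq_abs]; ring
  clear_value x y
  have hxy : x ^ 2 - D * y ^ 2 = 1 := by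
    rw [hx2, hy2, hX2]; ring
  have hab' : a ^ 2 - D * b ^ 2 = -1 := by linarith
  obtain ⟨b', hb'def⟩ : ∃ v : ℤ, v = b * x - a * y := ⟨_, rfl⟩
  obtain ⟨a', ha'def⟩ : ∃ v : ℤ, v = D * b * y - a * x := ⟨_, rfl⟩
  have hbb : b ^ 2 * x ^ 2 - a ^ 2 * y ^ 2 = b ^ 2 + y ^ 2 := by
    linear_combination b ^ 2 * hxy + y ^ 2 * hDb
  have hb'pos : 0 < b' := by
    have hlt : (a * y) ^ 2 < (b * x) ^ 2 := by
      linarith [hbb, sq_nonneg b, mul_pos hypos hypos]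
    have : a * y < b * x := lt_of_pow_lt_pow_left₀ 2 (by positivity) hlt
    rw [hb'def]
    linarith
  have hnorm : a' ^ 2 - D * b' ^ 2 = -1 := by
    have hid : a' ^ 2 - D * b' ^ 2 = (a ^ 2 - D * b ^ 2) * (x ^ 2 - D * y ^ 2) := by
      rw [ha'def, hb'def]; ring
    rw [hid, hab', hxy]; ring
  have hnormD : D * b' ^ 2 = a' ^ 2 + 1 := by linarith
  have hb'sq : 1 ≤ b' ^ 2 := by nlinarith [hb'pos]
  have ha'ne : a' ≠ 0 := by
    intro h
    rw [h] at hnormD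
    have : 0 ≤ (D - 2) * (b' ^ 2 - 1) :=
      mul_nonneg (by linarith) (by linarith)
    nlinarith [this]
  have hminle : a ≤ |a'| := by
    apply hmin |a'| b' (abs_pos.mpr ha'ne) hb'pos
    rw [sq_abs]
    exact hnorm
  have hy_id : y = b * a' + a * b' := by
    rw [ha'def, hb'def]
    linear_combination (-y) * hDb
  rcases lt_or_gt_of_ne ha'ne with ha'neg | ha'pos
  · -- a' < 0 : contradiction from y ≥ 1
    have hua : a ≤ -a' := by rwa [abs_of_neg ha'neg] at hminle
    have h1 : b * (-a') + 1 ≤ a * b' := by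
      have hy1 : 1 ≤ y := hypos
      have : b * a' ≤ b * a' := le_refl _
      linarith [hy_id]
    have hpos1 : (0 : ℤ) ≤ b * (-a') + 1 := by
      have : 0 < b * (-a') := mul_pos hb (by linarith)
      linarith
    have h2 : (b * (-a') + 1) ^ 2 ≤ (a * b') ^ 2 := pow_le_pow_left₀ hpos1 h1 2
    have h3 : D * (b * (-a') + 1) ^ 2 ≤ D * (a * b') ^ 2 :=
      mul_le_mul_of_nonneg_left h2 (by linarith)
    have h4 : D * (a * b') ^ 2 = a ^ 2 * a' ^ 2 + a ^ 2 := by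
      linear_combination a ^ 2 * hnormD
    have h5 : D * (b * (-a') + 1) ^ 2 =
        a ^ 2 * a' ^ 2 + a' ^ 2 + 2 * D * (b * (-a')) + D := by
      linear_combination a' ^ 2 * hDb
    have hu2 : a ^ 2 ≤ a' ^ 2 := by
      have h6 : a ^ 2 ≤ (-a') ^ 2 := pow_le_pow_left₀ ha.le hua 2
      linarith [h6, (by ring : (-a') ^ 2 = a' ^ 2)]
    have h7 : 0 < D * (b * (-a')) :=
      mul_pos hDpos (mul_pos hb (by linarith))
    linarith [h3, h4, h5, hu2, h7]
  · -- a' > 0 : minimality gives a ≤ a', whence y ≥ a*b + a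
    have haa : a ≤ a' := by rwa [abs_of_pos ha'pos] at hminle
    have hb'1 : 1 ≤ b' := hb'pos
    have hyge : a * b + a ≤ y := by
      have h8 : b * a ≤ b * a' := mul_le_mul_of_nonneg_left haa hb.le
      have h9 : a * 1 ≤ a * b' := mul_le_mul_of_nonneg_left hb'1 ha.le
      linarith [hy_id, h8, h9]
    have hky : D * y ^ 2 ≤ a ^ 2 := by
      calc D * y ^ 2 = 4 * D * m ^ 2 := by rw [hy2]; ring
        _ ≤ a ^ 2 := hkey
    have h6 : (a * b + a) ^ 2 ≤ y ^ 2 := pow_le_pow_left₀ (by positivity) hyge 2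
    have h7 : D * (a * b + a) ^ 2 ≤ D * y ^ 2 :=
      mul_le_mul_of_nonneg_left h6 (by linarith)
    have h8 : D * (a * b + a) ^ 2 =
        (a ^ 2 + 1) * a ^ 2 + 2 * (D * a ^ 2 * b) + D * a ^ 2 := by
      linear_combination a ^ 2 * hDb
    have p1 : 0 < a ^ 2 * a ^ 2 := by positivity
    have p2 : 0 < D * a ^ 2 * b := by positivity
    have p3 : 0 < D * a ^ 2 := by positivity
    linarith [hky, h7, h8, p1, p2, p3]
end

section
/- There exist no integers r, m, s and real number λ₀ ≥ 0 satisfying simultaneously: the wall equation a·((n−1)·r + s) = −2·(n−1)·(b·t + λ₀)·m, the condition (n−1)·r − s = 2 (i.e. ⟨w, vₙ⟩ = 2 for w = (r, m, s)), and t·m² = r·s (i.e. w is isotropic: ⟨w, w⟩ = 0). Consequently the stability conditions σ_{λω₀,β₀}, λ ≥ 1, lie on no Li–Gieseker–Uhlenbeck wall with respect to vₙ. -/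
/-- No Li–Gieseker–Uhlenbeck wall: there are no integers r, m, s and real
λ₀ ≥ 0 satisfying the wall equation, (n−1)r − s = 2 (⟨w,vₙ⟩ = 2) and tm² = rs
(⟨w,w⟩ = 0). -/
theorem stmt_8 (n t a b : ℤ) (hn : 2 ≤ n) (ht : 2 ≤ t)
    (hnsq : ¬ ∃ k : ℤ, k ^ 2 = t * (n - 1))
    (ha : 0 < a) (hb : 0 < b)
    (hab : a ^ 2 - t * (n - 1) * b ^ 2 = -1)
    (hmin : ∀ a' b' : ℤ, 0 < a' → 0 < b' →
      a' ^ 2 - t * (n - 1) * b' ^ 2 = -1 → a ≤ a') :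
    ¬ ∃ (r m s : ℤ) (lam₀ : ℝ), 0 ≤ lam₀ ∧
      (a : ℝ) * (((n : ℝ) - 1) * (r : ℝ) + (s : ℝ)) =
        -2 * ((n : ℝ) - 1) * ((b : ℝ) * (t : ℝ) + lam₀) * (m : ℝ) ∧
      (n - 1) * r - s = 2 ∧
      t * m ^ 2 = r * s := by
  rintro ⟨r, m, s, lam₀, h0, hwall, h2, h3⟩
  have hE1 : (1:ℤ) ≤ n - 1 := by omega
  have hD : (2:ℤ) ≤ t * (n - 1) := by nlinarith
  -- m ≠ 0
  have hm : m ≠ 0 := by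
    rintro rfl
    have ha' : (0:ℝ) < (a:ℝ) := by exact_mod_cast ha
    have hx0 : (a:ℝ) * (((n:ℝ) - 1) * (r:ℝ) + (s:ℝ)) = 0 := by
      rw [hwall]; push_cast; ring
    have hx : ((n:ℝ) - 1) * (r:ℝ) + (s:ℝ) = 0 := by
      rcases mul_eq_zero.mp hx0 with h | h
      · linarith
      · exact h
    have hxZ : (n - 1) * r + s = 0 := by
      have : (((n - 1) * r + s : ℤ) : ℝ) = 0 := by push_cast; linarith
      exact_mod_cast this
    have hs : s = -1 := by linarith
    have hrs : r * s = 0 := by simpa using h3.symm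
    have hr : r = 0 := by rw [hs] at hrs; omega
    rw [hr, hs] at hxZ
    simp at hxZ
  -- key identity : (E r + s)^2 = 4 (1 + D m^2)
  have key1 : ((n - 1) * r + s) ^ 2 = 4 * (1 + t * (n - 1) * m ^ 2) := by
    linear_combination ((n - 1) * r - s + 2) * h2 - 4 * (n - 1) * h3
  -- (n-1)r + s is even
  have hdvd : (2:ℤ) ∣ ((n - 1) * r + s) := by
    have h2dvd : (2:ℤ) ∣ ((n - 1) * r + s) ^ 2 :=
      ⟨2 * (1 + t * (n - 1) * m ^ 2), by linarith [key1]⟩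
    exact Int.prime_two.dvd_of_dvd_pow h2dvd
  obtain ⟨c, hcdef⟩ := hdvd
  have hc2 : c ^ 2 = 1 + t * (n - 1) * m ^ 2 := by
    have h5 : 4 * c ^ 2 = 4 * (1 + t * (n - 1) * m ^ 2) := by
      rw [hcdef] at key1; linear_combination key1
    linarith
  -- squared wall inequality over ℤ
  have hsqZ : 4 * (n - 1) ^ 2 * b ^ 2 * t ^ 2 * m ^ 2 ≤ a ^ 2 * ((n - 1) * r + s) ^ 2 := by
    have hbt : (0:ℝ) ≤ (b:ℝ) * (t:ℝ) := by positivity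
    have h1 : ((a:ℝ) * (((n:ℝ) - 1) * r + s)) ^ 2
        = (-2 * ((n:ℝ) - 1) * ((b:ℝ) * (t:ℝ) + lam₀) * m) ^ 2 := by rw [hwall]
    have h2' : (0:ℝ) ≤ lam₀ * (2 * ((b:ℝ) * (t:ℝ)) + lam₀) := by nlinarith
    have hcast : ((4 * (n - 1) ^ 2 * b ^ 2 * t ^ 2 * m ^ 2 : ℤ) : ℝ)
        ≤ ((a ^ 2 * ((n - 1) * r + s) ^ 2 : ℤ) : ℝ) := by
      push_cast
      nlinarith [h1, mul_nonneg h2' (sq_nonneg (((n:ℝ) - 1) * (m:ℝ)))]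
    exact_mod_cast hcast
  -- a^2 ≥ D m^2
  have h6 : 4 * (n - 1) ^ 2 * b ^ 2 * t ^ 2 * m ^ 2
      ≤ a ^ 2 * (4 * (1 + t * (n - 1) * m ^ 2)) := by
    rw [← key1]; exact hsqZ
  have h7 : (a ^ 2 - t * (n - 1) * b ^ 2) * (4 * t * (n - 1) * m ^ 2)
      = -(4 * t * (n - 1) * m ^ 2) := by linear_combination (4 * t * (n - 1) * m ^ 2) * hab
  have ha2 : t * (n - 1) * m ^ 2 ≤ a ^ 2 := by nlinarith [h6, h7]
  have hmb : m ^ 2 < b ^ 2 := by nlinarith [ha2, hab, hD, sq_nonneg m]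
  have hmb1 : m ^ 2 + 1 ≤ b ^ 2 := hmb
  -- absolute values
  have hμpos : 0 < |m| := abs_pos.mpr hm
  have hμ : 1 ≤ |m| := hμpos
  have hcne : c ≠ 0 := by
    rintro rfl
    have : (0:ℤ) = 1 + t * (n - 1) * m ^ 2 := by simpa using hc2
    nlinarith [sq_nonneg m]
  have hc0pos : 0 < |c| := abs_pos.mpr hcne
  have hc0 : 1 ≤ |c| := hc0pos
  have hcμ : |c| ^ 2 - t * (n - 1) * |m| ^ 2 = 1 := by
    rw [sq_abs, sq_abs]; linarith [hc2]
  -- B > 0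
  have keyB : (a * |m|) ^ 2 + b ^ 2 + |m| ^ 2 = (b * |c|) ^ 2 := by
    linear_combination |m| ^ 2 * hab - b ^ 2 * hcμ
  have h8 : (a * |m|) ^ 2 < (b * |c|) ^ 2 := by
    linarith [keyB, pow_pos hb 2, pow_pos hμpos 2]
  have hBpos : 0 < b * |c| - a * |m| := by
    have := lt_of_pow_lt_pow_left₀ 2 (by positivity : (0:ℤ) ≤ b * |c|) h8
    linarith
  -- A > 0
  have keyA : (a * |c|) ^ 2 = (t * (n - 1) * b * |m|) ^ 2 + t * (n - 1) * (b ^ 2 - |m| ^ 2) - 1 := by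
    linear_combination |c| ^ 2 * hab + (t * (n - 1) * b ^ 2 - 1) * hcμ
  have h9 : (t * (n - 1) * b * |m|) ^ 2 < (a * |c|) ^ 2 := by
    have hmm : |m| ^ 2 = m ^ 2 := sq_abs m
    have hu : (1:ℤ) ≤ b ^ 2 - |m| ^ 2 := by rw [hmm]; linarith
    have hprod : (2:ℤ) * 1 ≤ (t * (n - 1)) * (b ^ 2 - |m| ^ 2) :=
      mul_le_mul hD hu (by norm_num) (by linarith)
    linarith [keyA]
  have hApos : 0 < a * |c| - t * (n - 1) * b * |m| := by
    have := lt_of_pow_lt_pow_left₀ 2 (by positivity : (0:ℤ) ≤ a * |c|) h9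
    linarith
  -- Pell equation for (A, B)
  have hPell : (a * |c| - t * (n - 1) * b * |m|) ^ 2
      - t * (n - 1) * (b * |c| - a * |m|) ^ 2 = -1 := by
    linear_combination (|c| ^ 2 - t * (n - 1) * |m| ^ 2) * hab - hcμ
  -- A < a
  have e3 : a ^ 2 * |c| ^ 2 - a ^ 2 = a ^ 2 * (t * (n - 1)) * |m| ^ 2 := by
    linear_combination a ^ 2 * hcμ
  have e4 : a ^ 2 * (t * (n - 1)) * |m| ^ 2
      = (t * (n - 1)) ^ 2 * b ^ 2 * |m| ^ 2 - t * (n - 1) * |m| ^ 2 := by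
    linear_combination t * (n - 1) * |m| ^ 2 * hab
  have e5 : 0 < t * (n - 1) * |m| ^ 2 := by positivity
  have h10 : (a * (|c| - 1)) ^ 2 < (t * (n - 1) * b * |m|) ^ 2 := by
    have h11 : (0:ℤ) ≤ a ^ 2 * (|c| - 1) :=
      mul_nonneg (sq_nonneg a) (by linarith)
    linarith [e3, e4, e5, h11]
  have hAlt : a * |c| - t * (n - 1) * b * |m| < a := by
    have := lt_of_pow_lt_pow_left₀ 2 (by positivity : (0:ℤ) ≤ t * (n - 1) * b * |m|) h10
    linarith [this]
  have := hmin (a * |c| - t * (n - 1) * b * |m|) (b * |c| - a * |m|) hApos hBpos hPell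
  linarith
end

section
/- There exist no integers r, m, s and real number λ₀ ≥ 0, with λ = √(1 + 2(n−1)bλ₀), satisfying simultaneously: (i) the wall equation a·((n−1)·r + s) = −2·(n−1)·(b·t + λ₀)·m; (ii) r·s − t·m² = 1 (w = (r, m, s) is spherical); (iii) s > (n−1)·r (i.e. ⟨w, vₙ⟩ < 0); and (iv) the effectivity inequality (λ² + 1)·(−(2a/b)·m − s + ((λ² − a²)/(t·b²))·r) + 2·a·λ²·((2a/(t·b²))·r + (2/b)·m) > 0, which expresses Re(Z_λ(w)/Z_λ(vₙ)) > 0. Consequently the stability conditions σ_{λω₀,β₀}, λ ≥ 1, lie on no totally semistable wall with respect to vₙ. -/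
set_option maxHeartbeats 1000000

/-- No totally semistable wall: there are no integers r, m, s and real
λ₀ ≥ 0, with λ = √(1 + 2(n−1)bλ₀), satisfying the wall equation, rs − tm² = 1,
s > (n−1)r, and the effectivity inequality. -/
theorem stmt_9 (n t a b : ℤ) (hn : 2 ≤ n) (ht : 2 ≤ t)
    (hnsq : ¬ ∃ k : ℤ, k ^ 2 = t * (n - 1))
    (ha : 0 < a) (hb : 0 < b)
    (hab : a ^ 2 - t * (n - 1) * b ^ 2 = -1)
    (hmin : ∀ a' b' : ℤ, 0 < a' → 0 < b' →
      a' ^ 2 - t * (n - 1) * b' ^ 2 = -1 → a ≤ a') :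
    ¬ ∃ (r m s : ℤ) (lam₀ : ℝ), 0 ≤ lam₀ ∧
      (let lam : ℝ := Real.sqrt (1 + 2 * ((n : ℝ) - 1) * (b : ℝ) * lam₀)
      (a : ℝ) * (((n : ℝ) - 1) * (r : ℝ) + (s : ℝ)) =
        -2 * ((n : ℝ) - 1) * ((b : ℝ) * (t : ℝ) + lam₀) * (m : ℝ) ∧
      r * s - t * m ^ 2 = 1 ∧
      (n - 1) * r < s ∧
      (lam ^ 2 + 1) *
          (-(2 * (a : ℝ) / (b : ℝ)) * (m : ℝ) - (s : ℝ) +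
            ((lam ^ 2 - (a : ℝ) ^ 2) / ((t : ℝ) * (b : ℝ) ^ 2)) * (r : ℝ)) +
        2 * (a : ℝ) * lam ^ 2 *
          ((2 * (a : ℝ) / ((t : ℝ) * (b : ℝ) ^ 2)) * (r : ℝ) +
            (2 / (b : ℝ)) * (m : ℝ)) > 0) := by
  rintro ⟨r, m, s, l0, hl0, h1, h2, h3, h4⟩
  -- basic positivity facts
  have hK1 : (1 : ℤ) ≤ n - 1 := by omega
  have hKR : (1 : ℝ) ≤ (n : ℝ) - 1 := by
    have : (2 : ℝ) ≤ (n : ℝ) := by exact_mod_cast hn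
    linarith
  have haR : (0 : ℝ) < (a : ℝ) := by exact_mod_cast ha
  have hbR : (0 : ℝ) < (b : ℝ) := by exact_mod_cast hb
  have htR : (0 : ℝ) < (t : ℝ) := by
    have : (2 : ℝ) ≤ (t : ℝ) := by exact_mod_cast ht
    linarith
  have habR : (a : ℝ) ^ 2 - (t : ℝ) * ((n : ℝ) - 1) * (b : ℝ) ^ 2 = -1 := by
    exact_mod_cast hab
  set lam : ℝ := Real.sqrt (1 + 2 * ((n : ℝ) - 1) * (b : ℝ) * l0) with hlamdef
  have hprod : 0 ≤ ((n : ℝ) - 1) * (b : ℝ) * l0 :=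
    mul_nonneg (mul_nonneg (by linarith) hbR.le) hl0
  have hargnn : 0 ≤ 1 + 2 * ((n : ℝ) - 1) * (b : ℝ) * l0 := by linarith
  have hL : lam ^ 2 = 1 + 2 * ((n : ℝ) - 1) * (b : ℝ) * l0 := Real.sq_sqrt hargnn
  have hL1 : 1 ≤ lam ^ 2 := by rw [hL]; linarith
  -- the wall equation in polynomial form
  have hW : (a : ℝ) * b * (((n : ℝ) - 1) * r + s) + (lam ^ 2 + 2 * a ^ 2 + 1) * m = 0 := by
    linear_combination (b : ℝ) * h1 + (m : ℝ) * hL + 2 * (m : ℝ) * habR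
  -- effectivity cleared of denominators
  have htb2 : (0 : ℝ) < (t : ℝ) * (b : ℝ) ^ 2 := by positivity
  clear_value lam
  have hE : 0 < (lam ^ 2 + 1) * (-(2 * (a : ℝ) * t * b * m) - t * b ^ 2 * s +
      (lam ^ 2 - (a : ℝ) ^ 2) * r) + 2 * (a : ℝ) * lam ^ 2 * (2 * a * r + 2 * t * b * m) := by
    have h' := mul_pos htb2 h4
    have heq : (t : ℝ) * (b : ℝ) ^ 2 *
        ((lam ^ 2 + 1) *
          (-(2 * (a : ℝ) / (b : ℝ)) * (m : ℝ) - (s : ℝ) +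
            ((lam ^ 2 - (a : ℝ) ^ 2) / ((t : ℝ) * (b : ℝ) ^ 2)) * (r : ℝ)) +
        2 * (a : ℝ) * lam ^ 2 *
          ((2 * (a : ℝ) / ((t : ℝ) * (b : ℝ) ^ 2)) * (r : ℝ) +
            (2 / (b : ℝ)) * (m : ℝ))) =
        (lam ^ 2 + 1) * (-(2 * (a : ℝ) * t * b * m) - t * b ^ 2 * s +
          (lam ^ 2 - (a : ℝ) ^ 2) * r) + 2 * (a : ℝ) * lam ^ 2 * (2 * a * r + 2 * t * b * m) := by
      field_simp
    rw [← heq]; exact h'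
  -- positivity of the "c" factor: a*r + t*b*m > 0
  have hfac : (0 : ℝ) < (lam ^ 2 + 1) ^ 2 + 4 * (a : ℝ) ^ 2 * lam ^ 2 := by positivity
  have hid2 : (a : ℝ) * ((lam ^ 2 + 1) * (-(2 * (a : ℝ) * t * b * m) - t * b ^ 2 * s +
      (lam ^ 2 - (a : ℝ) ^ 2) * r) + 2 * (a : ℝ) * lam ^ 2 * (2 * a * r + 2 * t * b * m)) =
      ((a : ℝ) * r + t * b * m) * ((lam ^ 2 + 1) ^ 2 + 4 * (a : ℝ) ^ 2 * lam ^ 2) := by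
    linear_combination (-(lam ^ 2 + 1) * (t : ℝ) * b) * hW + (-(lam ^ 2 + 1) * (a : ℝ) * r) * habR
  have hcR : (0 : ℝ) < (a : ℝ) * r + t * b * m := by
    by_contra hle
    push_neg at hle
    have h5 := mul_pos haR hE
    nlinarith [mul_nonneg (neg_nonneg.2 hle) hfac.le]
  have hcZ : 1 ≤ a * r + t * b * m := by
    have h0 : (0 : ℤ) < a * r + t * b * m := by
      exact_mod_cast (by push_cast; linarith : (0:ℝ) < ((a * r + t * b * m : ℤ) : ℝ))
    omega
  have hQpos : (0 : ℝ) < lam ^ 2 + 2 * (a : ℝ) ^ 2 + 1 := by positivity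
  clear hcR hid2 hfac hE htb2 h4 h1 hprod hargnn hl0
  rcases lt_trichotomy m 0 with hm | hm | hm
  · -- case m < 0
    have hmR : (m : ℝ) < 0 := by exact_mod_cast hm
    have hsigR : (0 : ℝ) < ((n : ℝ) - 1) * r + s := by
      by_contra hle
      push_neg at hle
      nlinarith [mul_pos hQpos (neg_pos.2 hmR), mul_nonneg (mul_pos haR hbR).le (neg_nonneg.2 hle)]
    have hsigZ : 1 ≤ (n - 1) * r + s := by
      have h0 : (0 : ℤ) < (n - 1) * r + s := by
        exact_mod_cast (by push_cast; linarith : (0:ℝ) < (((n - 1) * r + s : ℤ) : ℝ))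
      omega
    have hs1 : 1 ≤ s := by
      have : 1 ≤ 2 * s := by linarith [h3, hsigZ]
      omega
    have hm2 : 1 ≤ m ^ 2 := by nlinarith [hm]
    have hr1 : 1 ≤ r := by
      by_contra hr0
      push_neg at hr0
      have hr0' : r ≤ 0 := by omega
      nlinarith [mul_nonneg (neg_nonneg.2 hr0') (by linarith : (0:ℤ) ≤ s), h2, hm2, ht]
    -- step: (n-1)*r^2 ≥ t*m^2 + 1
    have hKr : t * m ^ 2 + 1 ≤ (n - 1) * r ^ 2 := by
      by_contra h'
      push_neg at h'
      have h'' : (n - 1) * r ^ 2 ≤ t * m ^ 2 := by omega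
      have hpos1 : (0 : ℤ) ≤ 1 - t * b * m := by
        nlinarith [mul_nonneg (mul_nonneg (show (0:ℤ) ≤ t by omega) hb.le)
          (show (0:ℤ) ≤ -m by omega)]
      have hsq : (1 - t * b * m) ^ 2 ≤ (a * r) ^ 2 :=
        pow_le_pow_left₀ hpos1 (by linarith [hcZ]) 2
      have habr : a ^ 2 * r ^ 2 = (t * (n - 1) * b ^ 2 - 1) * r ^ 2 := by
        linear_combination r ^ 2 * hab
      have hmul := mul_le_mul_of_nonneg_left h'' (by positivity : (0:ℤ) ≤ t * b ^ 2)
      have hmneg := mul_le_mul_of_nonneg_left (show m ≤ -1 by omega)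
        (by positivity : (0:ℤ) ≤ 2 * t * b)
      nlinarith [hmul, hsq, habr, hmneg, hr1]
    have h3' : (n - 1) * r + 1 ≤ s := by omega
    nlinarith [mul_nonneg (by linarith : (0:ℤ) ≤ r) (by linarith : (0:ℤ) ≤ s - ((n-1)*r + 1)),
      h2, hKr, hr1]
  · -- case m = 0
    subst hm
    have hW' : (a : ℝ) * b * (((n : ℝ) - 1) * r + s) = 0 := by
      push_cast at hW ⊢
      linarith [hW]
    have hsig0 : (((n : ℝ) - 1) * r + s) = 0 := by
      rcases mul_eq_zero.mp (show ((a : ℝ) * b) * (((n : ℝ) - 1) * r + s) = 0 by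
        linarith [hW']) with h | h
      · exact absurd h (ne_of_gt (mul_pos haR hbR))
      · exact h
    have hsigZ : (n - 1) * r + s = 0 := by
      exact_mod_cast (by push_cast; linarith [hsig0] : (((n - 1) * r + s : ℤ) : ℝ) = 0)
    have hh : (n - 1) * r ^ 2 + r * s = 0 := by linear_combination r * hsigZ
    nlinarith [h2, hh, mul_nonneg (by omega : (0:ℤ) ≤ n - 1) (sq_nonneg r)]
  · -- case m > 0
    have hmR : (0 : ℝ) < (m : ℝ) := by exact_mod_cast hm
    have hsigR : ((n : ℝ) - 1) * r + s < 0 := by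
      by_contra hle
      push_neg at hle
      nlinarith [mul_pos hQpos hmR, mul_nonneg (mul_pos haR hbR).le hle]
    have hsigZ : (n - 1) * r + s ≤ -1 := by
      have h0 : ((n - 1) * r + s : ℤ) < 0 := by
        exact_mod_cast (by push_cast; linarith : (((n - 1) * r + s : ℤ) : ℝ) < 0)
      omega
    have hX : (n - 1) * r ≤ -1 := by linarith [h3, hsigZ]
    have hr : r ≤ -1 := by
      by_contra h'
      push_neg at h'
      have h'' : 0 ≤ r := by omega
      nlinarith [mul_nonneg (by omega : (0:ℤ) ≤ n - 1) h'', hX]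
    have hm2 : 1 ≤ m ^ 2 := by nlinarith [hm]
    have hs : s ≤ -1 := by
      by_contra h'
      push_neg at h'
      have h'' : 0 ≤ s := by omega
      nlinarith [mul_nonneg (by omega : (0:ℤ) ≤ -r) h'', h2, hm2, ht]
    -- (B): (n-1)*r^2 + r ≥ t*m^2 + 1
    have h3' : (n - 1) * r + 1 ≤ s := by omega
    have hB : t * m ^ 2 + 1 ≤ (n - 1) * r ^ 2 + r := by
      have hprod := mul_nonneg (by linarith : (0:ℤ) ≤ -r)
        (by linarith : (0:ℤ) ≤ s - ((n - 1) * r + 1))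
      nlinarith [hprod, h2]
    -- (D): a*b*(-( (n-1)r + s )) ≥ (2a^2+2) m
    have hDR : (2 * (a : ℝ) ^ 2 + 2) * m ≤ (a : ℝ) * b * (-(((n : ℝ) - 1) * r + s)) := by
      nlinarith [hW, mul_nonneg (by linarith [hL1] : (0:ℝ) ≤ lam ^ 2 - 1) hmR.le]
    have hD : (2 * a ^ 2 + 2) * m ≤ a * b * (-((n - 1) * r + s)) := by
      exact_mod_cast (by push_cast; linarith [hDR] :
        (((2 * a ^ 2 + 2) * m : ℤ) : ℝ) ≤ ((a * b * (-((n - 1) * r + s)) : ℤ) : ℝ))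
    -- (D2): a*((n-1)r^2 + t m^2 + 1) + 2 t (n-1) b m r ≥ 0
    have hD2b : (2 * a ^ 2 + 2) * m * (-r) ≤ a * b * ((n - 1) * r ^ 2 + t * m ^ 2 + 1) := by
      have key := mul_le_mul_of_nonneg_right hD (by omega : (0:ℤ) ≤ -r)
      have keq : a * b * (-((n - 1) * r + s)) * (-r) =
          a * b * ((n - 1) * r ^ 2 + t * m ^ 2 + 1) := by
        linear_combination (a * b) * h2
      linarith [keq ▸ key]
    have hz : t * (n - 1) * b ^ 2 = a ^ 2 + 1 := by linarith [hab]
    have hD2 : 0 ≤ a * ((n - 1) * r ^ 2 + t * m ^ 2 + 1) + 2 * t * (n - 1) * b * m * r := by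
      have hrew : b * (2 * t * (n - 1) * b * m * (-r)) = (2 * a ^ 2 + 2) * m * (-r) := by
        linear_combination 2 * m * (-r) * hz
      have hcancel : b * (2 * t * (n - 1) * b * m * (-r)) ≤
          b * (a * ((n - 1) * r ^ 2 + t * m ^ 2 + 1)) := by
        rw [hrew]
        calc (2 * a ^ 2 + 2) * m * (-r) ≤ a * b * ((n - 1) * r ^ 2 + t * m ^ 2 + 1) := hD2b
          _ = b * (a * ((n - 1) * r ^ 2 + t * m ^ 2 + 1)) := by ring
      have := le_of_mul_le_mul_left hcancel hb
      linarith
    rcases le_or_gt (t * m ^ 2) (a ^ 2) with hsub | hsub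
    · -- subcase t m^2 ≤ a^2
      have hpos1 : (0 : ℤ) ≤ a * (-r) + 1 := by
        nlinarith [mul_pos ha (show (0:ℤ) < -r by omega)]
      have hsq : (a * (-r) + 1) ^ 2 ≤ (t * b * m) ^ 2 :=
        pow_le_pow_left₀ hpos1 (by linarith [hcZ]) 2
      have hsqK := mul_le_mul_of_nonneg_left hsq (by omega : (0:ℤ) ≤ n - 1)
      have hBa := mul_le_mul_of_nonneg_left hB (sq_nonneg a)
      have hid : (n - 1) * (t * b * m) ^ 2 = t * m ^ 2 * (a ^ 2 + 1) := by
        linear_combination (-(t * m ^ 2)) * hab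
      have h8 : a ^ 2 * 1 ≤ a ^ 2 * (-r) :=
        mul_le_mul_of_nonneg_left (by omega) (sq_nonneg a)
      have h9 : (n - 1) * a * 1 ≤ (n - 1) * a * (-r) :=
        mul_le_mul_of_nonneg_left (by omega) (by positivity)
      nlinarith [hsqK, hBa, hid, h8, h9, hsub, hK1, ha, hm]
    · -- subcase a^2 < t m^2
      have hsub' : a ^ 2 + 1 ≤ t * m ^ 2 := by omega
      clear hW hL hL1 hQpos hsigR hsigZ hX hm2 hs h3' hDR hD hD2b hz hmR h2 h3
      -- move to ℝ
      have hrR : (r : ℝ) ≤ -1 := by exact_mod_cast hr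
      have hm1R : (1 : ℝ) ≤ (m : ℝ) := by exact_mod_cast hm
      have hsubR : (a : ℝ) ^ 2 + 1 ≤ (t : ℝ) * (m : ℝ) ^ 2 := by exact_mod_cast hsub'
      have hBR : (t : ℝ) * m ^ 2 + 1 ≤ ((n : ℝ) - 1) * r ^ 2 + r := by
        exact_mod_cast (show ((t * m ^ 2 + 1 : ℤ) : ℝ) ≤ (((n - 1) * r ^ 2 + r : ℤ) : ℝ) by
          exact_mod_cast hB)
      have hD2R : (0 : ℝ) ≤ (a : ℝ) * (((n : ℝ) - 1) * r ^ 2 + t * m ^ 2 + 1) +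
          2 * t * ((n : ℝ) - 1) * b * m * r := by
        exact_mod_cast (show ((0 : ℤ) : ℝ) ≤
          ((a * ((n - 1) * r ^ 2 + t * m ^ 2 + 1) + 2 * t * (n - 1) * b * m * r : ℤ) : ℝ) by
          exact_mod_cast hD2)
      set W : ℝ := Real.sqrt (((n : ℝ) - 1) * ((t : ℝ) * m ^ 2 - a ^ 2)) with hWdef
      have harg : 0 ≤ ((n : ℝ) - 1) * ((t : ℝ) * m ^ 2 - a ^ 2) :=
        mul_nonneg (by linarith) (by linarith)
      have hW2 : W ^ 2 = ((n : ℝ) - 1) * ((t : ℝ) * m ^ 2 - a ^ 2) := Real.sq_sqrt harg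
      have hWnn : 0 ≤ W := Real.sqrt_nonneg _
      -- X := t(n-1)bm + a(n-1)r  is ≥ 0 and X^2 ≥ W^2
      have hcR' : (1 : ℝ) ≤ (a : ℝ) * r + t * b * m := by
        exact_mod_cast (show ((1 : ℤ) : ℝ) ≤ ((a * r + t * b * m : ℤ) : ℝ) by exact_mod_cast hcZ)
      have hXpos : (0 : ℝ) ≤ (t : ℝ) * ((n : ℝ) - 1) * b * m + a * ((n : ℝ) - 1) * r := by
        have := mul_le_mul_of_nonneg_left hcR' (by linarith : (0:ℝ) ≤ (n : ℝ) - 1)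
        linarith only [this, hKR]
      have hgeid : ((t : ℝ) * ((n : ℝ) - 1) * b * m + a * ((n : ℝ) - 1) * r) ^ 2 -
          ((n : ℝ) - 1) * ((t : ℝ) * m ^ 2 - a ^ 2) =
          ((n : ℝ) - 1) * a * ((a : ℝ) * (((n : ℝ) - 1) * r ^ 2 + t * m ^ 2 + 1) +
            2 * t * ((n : ℝ) - 1) * b * m * r) := by
        linear_combination (-(((n : ℝ) - 1) * t * (m : ℝ) ^ 2)) * habR
      have hge : ((n : ℝ) - 1) * ((t : ℝ) * m ^ 2 - a ^ 2) ≤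
          ((t : ℝ) * ((n : ℝ) - 1) * b * m + a * ((n : ℝ) - 1) * r) ^ 2 := by
        have hpr := mul_nonneg (mul_nonneg (by linarith : (0:ℝ) ≤ (n:ℝ) - 1) haR.le) hD2R
        linarith only [hgeid, hpr]
      have hstep1 : W ≤ (t : ℝ) * ((n : ℝ) - 1) * b * m + a * ((n : ℝ) - 1) * r := by
        calc W ≤ Real.sqrt ((((t : ℝ) * ((n : ℝ) - 1) * b * m + a * ((n : ℝ) - 1) * r)) ^ 2) :=
              Real.sqrt_le_sqrt hge
          _ = (t : ℝ) * ((n : ℝ) - 1) * b * m + a * ((n : ℝ) - 1) * r := Real.sqrt_sq hXpos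
      clear_value W
      -- b W ≥ m
      have hidW : (t : ℝ) * ((b : ℝ) * W) ^ 2 = ((a : ℝ) ^ 2 + 1) * ((t : ℝ) * m ^ 2 - a ^ 2) := by
        linear_combination (t : ℝ) * (b : ℝ) ^ 2 * hW2 -
          ((t : ℝ) * (m : ℝ) ^ 2 - (a : ℝ) ^ 2) * habR
      have hbW : (m : ℝ) ≤ (b : ℝ) * W := by
        have h2' : (t : ℝ) * m ^ 2 ≤ t * ((b : ℝ) * W) ^ 2 := by
          rw [hidW]
          linarith [mul_le_mul_of_nonneg_left hsubR (sq_nonneg (a : ℝ))]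
        have h2'' : (m : ℝ) ^ 2 ≤ ((b : ℝ) * W) ^ 2 := le_of_mul_le_mul_left h2' htR
        by_contra h'
        push_neg at h'
        have hmbW : (0:ℝ) < (m : ℝ) + (b : ℝ) * W := by
          linarith only [mul_nonneg hbR.le hWnn, hm1R]
        nlinarith only [h2'', mul_pos (sub_pos.2 h') hmbW]
      -- final contradiction
      have hu : (0 : ℝ) ≤ (a : ℝ) * ((n : ℝ) - 1) * (-r) := by
        apply mul_nonneg (mul_nonneg haR.le (by linarith)) (by linarith)
      have hule : (a : ℝ) * ((n : ℝ) - 1) * (-r) ≤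
          (t : ℝ) * ((n : ℝ) - 1) * b * m - W := by linarith [hstep1]
      have husq : ((a : ℝ) * ((n : ℝ) - 1) * (-r)) ^ 2 ≤
          ((t : ℝ) * ((n : ℝ) - 1) * b * m - W) ^ 2 := pow_le_pow_left₀ hu hule 2
      have hid1 : ((t : ℝ) * ((n : ℝ) - 1) * b * m) ^ 2 =
          (t : ℝ) * ((n : ℝ) - 1) * ((a : ℝ) ^ 2 + 1) * m ^ 2 := by
        linear_combination (-((t : ℝ) * ((n : ℝ) - 1) * (m : ℝ) ^ 2)) * habR
      have haK : (0:ℝ) ≤ (a : ℝ) ^ 2 * ((n : ℝ) - 1) :=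
        mul_nonneg (sq_nonneg _) (by linarith)
      have hA1 := mul_le_mul_of_nonneg_left hBR haK
      have hA2 := mul_le_mul_of_nonneg_left hbW
        (show (0:ℝ) ≤ 2 * (t : ℝ) * ((n : ℝ) - 1) * m from
          mul_nonneg (mul_nonneg (by linarith) (by linarith)) (by linarith))
      have h8R : (a : ℝ) ^ 2 * ((n : ℝ) - 1) * 1 ≤ (a : ℝ) ^ 2 * ((n : ℝ) - 1) * (-r) :=
        mul_le_mul_of_nonneg_left (by linarith) haK
      have hfinpos : (0 : ℝ) < (a : ℝ) ^ 2 * ((n : ℝ) - 1) :=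
        mul_pos (by positivity) (by linarith)
      linarith only [husq, hid1, hA1, hA2, h8R, hfinpos, hW2]
end

section
/- Suppose integers r, m, s and a real number λ₀ ≥ 0, with λ = √(1 + 2(n−1)bλ₀), satisfy the wall equation a·((n−1)·r + s) = −2·(n−1)·(b·t + λ₀)·m, the sphericity condition r·s − t·m² = 1, the condition s > (n−1)·r, and the effectivity inequality (λ² + 1)·(−(2a/b)·m − s + ((λ² − a²)/(t·b²))·r) + 2·a·λ²·((2a/(t·b²))·r + (2/b)·m) > 0. Then m < 0 and (1 + 2·(n−1)·b·λ₀)·t·m² < a². -/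
/-- Under the wall equation, sphericity, s > (n−1)r and the effectivity
inequality (with λ = √(1 + 2(n−1)bλ₀)), one has m < 0 and (1 + 2(n−1)bλ₀)·t·m² < a². -/
theorem stmt_10 (n t a b : ℤ) (hn : 2 ≤ n) (ht : 2 ≤ t)
    (hnsq : ¬ ∃ k : ℤ, k ^ 2 = t * (n - 1))
    (ha : 0 < a) (hb : 0 < b)
    (hab : a ^ 2 - t * (n - 1) * b ^ 2 = -1)
    (hmin : ∀ a' b' : ℤ, 0 < a' → 0 < b' →
      a' ^ 2 - t * (n - 1) * b' ^ 2 = -1 → a ≤ a')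
    (r m s : ℤ) (lam₀ : ℝ) (hlam₀ : 0 ≤ lam₀)
    (lam : ℝ) (hlam : lam = Real.sqrt (1 + 2 * ((n : ℝ) - 1) * (b : ℝ) * lam₀))
    (hwall : (a : ℝ) * (((n : ℝ) - 1) * (r : ℝ) + (s : ℝ)) =
      -2 * ((n : ℝ) - 1) * ((b : ℝ) * (t : ℝ) + lam₀) * (m : ℝ))
    (hsph : r * s - t * m ^ 2 = 1)
    (hs : (n - 1) * r < s)
    (heff : (lam ^ 2 + 1) *
        (-(2 * (a : ℝ) / (b : ℝ)) * (m : ℝ) - (s : ℝ) +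
          ((lam ^ 2 - (a : ℝ) ^ 2) / ((t : ℝ) * (b : ℝ) ^ 2)) * (r : ℝ)) +
      2 * (a : ℝ) * lam ^ 2 *
        ((2 * (a : ℝ) / ((t : ℝ) * (b : ℝ) ^ 2)) * (r : ℝ) +
          (2 / (b : ℝ)) * (m : ℝ)) > 0) :
    m < 0 ∧
    (1 + 2 * ((n : ℝ) - 1) * (b : ℝ) * lam₀) * (t : ℝ) * (m : ℝ) ^ 2 < (a : ℝ) ^ 2 := by
  have haR : (0:ℝ) < (a:ℝ) := by exact_mod_cast ha
  have hbR : (0:ℝ) < (b:ℝ) := by exact_mod_cast hb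
  have htR : (0:ℝ) < (t:ℝ) := by exact_mod_cast (lt_of_lt_of_le (by norm_num) ht)
  have hN : (0:ℝ) < (n:ℝ) - 1 := by
    have : (2:ℝ) ≤ (n:ℝ) := by exact_mod_cast hn
    linarith
  have habR : (a:ℝ) ^ 2 - (t:ℝ) * ((n:ℝ) - 1) * (b:ℝ) ^ 2 = -1 := by
    exact_mod_cast hab
  have hsphR : (r:ℝ) * (s:ℝ) - (t:ℝ) * (m:ℝ) ^ 2 = 1 := by exact_mod_cast hsph
  have hsR : ((n:ℝ) - 1) * (r:ℝ) < (s:ℝ) := by exact_mod_cast hs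
  have hargnn : (0:ℝ) ≤ 1 + 2 * ((n : ℝ) - 1) * (b : ℝ) * lam₀ := by
    have : 0 ≤ 2 * ((n : ℝ) - 1) * (b : ℝ) * lam₀ := by positivity
    linarith
  have hL : lam ^ 2 = 1 + 2 * ((n : ℝ) - 1) * (b : ℝ) * lam₀ := by
    rw [hlam, sq, Real.mul_self_sqrt hargnn]
  -- Step 1: clear denominators in heff
  have heff2 : (0:ℝ) < (lam ^ 2 + 1) *
      (-(2 * (a:ℝ)) * (m:ℝ) * ((t:ℝ) * (b:ℝ)) - (s:ℝ) * ((t:ℝ) * (b:ℝ)^2) +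
        (lam ^ 2 - (a:ℝ) ^ 2) * (r:ℝ)) +
      2 * (a:ℝ) * lam ^ 2 * (2 * (a:ℝ) * (r:ℝ) + 2 * (t:ℝ) * (b:ℝ) * (m:ℝ)) := by
    have h := mul_pos heff (show (0:ℝ) < (t:ℝ) * (b:ℝ)^2 by positivity)
    have e : ((lam ^ 2 + 1) *
        (-(2 * (a : ℝ) / (b : ℝ)) * (m : ℝ) - (s : ℝ) +
          ((lam ^ 2 - (a : ℝ) ^ 2) / ((t : ℝ) * (b : ℝ) ^ 2)) * (r : ℝ)) +
      2 * (a : ℝ) * lam ^ 2 *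
        ((2 * (a : ℝ) / ((t : ℝ) * (b : ℝ) ^ 2)) * (r : ℝ) +
          (2 / (b : ℝ)) * (m : ℝ))) * ((t:ℝ) * (b:ℝ)^2) =
      (lam ^ 2 + 1) *
      (-(2 * (a:ℝ)) * (m:ℝ) * ((t:ℝ) * (b:ℝ)) - (s:ℝ) * ((t:ℝ) * (b:ℝ)^2) +
        (lam ^ 2 - (a:ℝ) ^ 2) * (r:ℝ)) +
      2 * (a:ℝ) * lam ^ 2 * (2 * (a:ℝ) * (r:ℝ) + 2 * (t:ℝ) * (b:ℝ) * (m:ℝ)) := by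
      field_simp
    rw [e] at h
    exact h
  -- Step 2: key identity giving a*r + t*b*m > 0
  have hc : (0:ℝ) < (a:ℝ) * (r:ℝ) + (t:ℝ) * (b:ℝ) * (m:ℝ) := by
    have h3 := mul_pos heff2 haR
    have keyid : ((lam ^ 2 + 1) *
      (-(2 * (a:ℝ)) * (m:ℝ) * ((t:ℝ) * (b:ℝ)) - (s:ℝ) * ((t:ℝ) * (b:ℝ)^2) +
        (lam ^ 2 - (a:ℝ) ^ 2) * (r:ℝ)) +
      2 * (a:ℝ) * lam ^ 2 * (2 * (a:ℝ) * (r:ℝ) + 2 * (t:ℝ) * (b:ℝ) * (m:ℝ))) * (a:ℝ) =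
      ((lam ^ 2 + 1) ^ 2 + 4 * (a:ℝ) ^ 2 * lam ^ 2) *
        ((a:ℝ) * (r:ℝ) + (t:ℝ) * (b:ℝ) * (m:ℝ)) := by
      linear_combination (-(lam ^ 2 + 1) * (t:ℝ) * (b:ℝ)^2) * hwall +
        (-(lam ^ 2 + 1) * ((a:ℝ) * (r:ℝ) + 2 * (t:ℝ) * (b:ℝ) * (m:ℝ))) * habR +
        (-(lam ^ 2 + 1) * (t:ℝ) * (b:ℝ) * (m:ℝ)) * hL
    rw [keyid] at h3
    have hK : (0:ℝ) < (lam ^ 2 + 1) ^ 2 + 4 * (a:ℝ) ^ 2 * lam ^ 2 := by positivity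
    rcases mul_pos_iff.mp h3 with ⟨_, hx⟩ | ⟨h1, _⟩
    · exact hx
    · linarith only [hK, h1]
  -- Step 3: m < 0
  have hmR : (m:ℝ) < 0 := by
    by_contra hm
    push_neg at hm
    have h4 : (a:ℝ) * (((n:ℝ) - 1) * (r:ℝ)) < (a:ℝ) * (s:ℝ) :=
      mul_lt_mul_of_pos_left hsR haR
    have h6 : (0:ℝ) ≤ ((n:ℝ) - 1) * (lam₀ * (m:ℝ)) :=
      mul_nonneg hN.le (mul_nonneg hlam₀ hm)
    linarith only [hwall, h4, mul_pos hN hc, h6]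
  have hm : m < 0 := by exact_mod_cast hmR
  refine ⟨hm, ?_⟩
  -- Step 4: the bound
  have F1 : (0:ℝ) < ((n:ℝ) - 1) * ((a:ℝ) * (r:ℝ) + (t:ℝ) * (b:ℝ) * (m:ℝ)) :=
    mul_pos hN hc
  have F2 : (0:ℝ) < (a:ℝ) * (s:ℝ) + ((n:ℝ) - 1) * (t:ℝ) * (b:ℝ) * (m:ℝ) := by
    have h4 : (a:ℝ) * (((n:ℝ) - 1) * (r:ℝ)) < (a:ℝ) * (s:ℝ) :=
      mul_lt_mul_of_pos_left hsR haR
    linarith only [h4, F1]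
  have E2 : (((n:ℝ) - 1) * ((a:ℝ) * (r:ℝ) + (t:ℝ) * (b:ℝ) * (m:ℝ))) *
      ((a:ℝ) * (s:ℝ) + ((n:ℝ) - 1) * (t:ℝ) * (b:ℝ) * (m:ℝ)) =
      ((n:ℝ) - 1) * ((a:ℝ) ^ 2 -
        (1 + 2 * ((n : ℝ) - 1) * (b : ℝ) * lam₀) * (t:ℝ) * (m:ℝ) ^ 2) := by
    linear_combination (((n:ℝ)-1) * (t:ℝ) * (b:ℝ) * (m:ℝ)) * hwall +
      (((n:ℝ)-1) * (a:ℝ)^2) * hsphR + (((n:ℝ)-1) * (t:ℝ) * (m:ℝ)^2) * habR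
  have h5 := mul_pos F1 F2
  rw [E2] at h5
  rcases mul_pos_iff.mp h5 with ⟨_, hx⟩ | ⟨h1, _⟩
  · linarith only [hx]
  · linarith only [hN, h1]
end

section
/- Suppose integers r, m, s and a real number λ₀ ≥ 0 satisfy the wall equation a·((n−1)·r + s) = −2·(n−1)·(b·t + λ₀)·m, the sphericity condition r·s − t·m² = 1, and s > (n−1)·r. Then 4·(n−1)·(t + 2·(n−1)·t·b·λ₀ + (n−1)·λ₀²)·m² ≥ (4n−3)·a². -/
/-- Under the wall equation, sphericity and s > (n−1)r, one has
4(n−1)(t + 2(n−1)tbλ₀ + (n−1)λ₀²)·m² ≥ (4n−3)·a². -/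
theorem stmt_11 (n t a b : ℤ) (hn : 2 ≤ n) (ht : 2 ≤ t)
    (hnsq : ¬ ∃ k : ℤ, k ^ 2 = t * (n - 1))
    (ha : 0 < a) (hb : 0 < b)
    (hab : a ^ 2 - t * (n - 1) * b ^ 2 = -1)
    (hmin : ∀ a' b' : ℤ, 0 < a' → 0 < b' →
      a' ^ 2 - t * (n - 1) * b' ^ 2 = -1 → a ≤ a')
    (r m s : ℤ) (lam₀ : ℝ) (hlam₀ : 0 ≤ lam₀)
    (hwall : (a : ℝ) * (((n : ℝ) - 1) * (r : ℝ) + (s : ℝ)) =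
      -2 * ((n : ℝ) - 1) * ((b : ℝ) * (t : ℝ) + lam₀) * (m : ℝ))
    (hsph : r * s - t * m ^ 2 = 1)
    (hs : (n - 1) * r < s) :
    4 * ((n : ℝ) - 1) *
        ((t : ℝ) + 2 * ((n : ℝ) - 1) * (t : ℝ) * (b : ℝ) * lam₀ +
          ((n : ℝ) - 1) * lam₀ ^ 2) * (m : ℝ) ^ 2 ≥
      (4 * (n : ℝ) - 3) * (a : ℝ) ^ 2 := by
  have hd : (1 : ℤ) ≤ s - (n - 1) * r := by omega
  have hd' : (1 : ℝ) ≤ (s : ℝ) - ((n : ℝ) - 1) * (r : ℝ) := by exact_mod_cast hd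
  have hn' : (2 : ℝ) ≤ (n : ℝ) := by exact_mod_cast hn
  have hsph' : (r : ℝ) * (s : ℝ) - (t : ℝ) * (m : ℝ) ^ 2 = 1 := by exact_mod_cast hsph
  have hab' : (a : ℝ) ^ 2 - (t : ℝ) * ((n : ℝ) - 1) * (b : ℝ) ^ 2 = -1 := by
    exact_mod_cast hab
  have ha' : (0 : ℝ) < (a : ℝ) := by exact_mod_cast ha
  have hw2 : ((a : ℝ) * (((n : ℝ) - 1) * (r : ℝ) + (s : ℝ))) ^ 2 =
      (-2 * ((n : ℝ) - 1) * ((b : ℝ) * (t : ℝ) + lam₀) * (m : ℝ)) ^ 2 := by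
    rw [hwall]
  have hkey : 4 * ((n : ℝ) - 1) *
      ((t : ℝ) + 2 * ((n : ℝ) - 1) * (t : ℝ) * (b : ℝ) * lam₀ +
        ((n : ℝ) - 1) * lam₀ ^ 2) * (m : ℝ) ^ 2 =
      (a : ℝ) ^ 2 * (((s : ℝ) - ((n : ℝ) - 1) * (r : ℝ)) ^ 2 + 4 * ((n : ℝ) - 1)) := by
    linear_combination -hw2 + 4 * ((n : ℝ) - 1) * (a : ℝ) ^ 2 * hsph'
      + 4 * ((n : ℝ) - 1) * (t : ℝ) * (m : ℝ) ^ 2 * hab'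
  rw [hkey]
  nlinarith [sq_nonneg (a : ℝ), mul_nonneg (sq_nonneg (a : ℝ))
    (by nlinarith : (0 : ℝ) ≤ ((s : ℝ) - ((n : ℝ) - 1) * (r : ℝ)) ^ 2 - 1)]
end

section
/- Suppose integers r, m, s and a real number λ₀ ≥ 0, with λ = √(1 + 2(n−1)bλ₀), satisfy the wall equation a·((n−1)·r + s) = −2·(n−1)·(b·t + λ₀)·m, the sphericity condition r·s − t·m² = 1, the condition s > (n−1)·r, and the effectivity inequality (λ² + 1)·(−(2a/b)·m − s + ((λ² − a²)/(t·b²))·r) + 2·a·λ²·((2a/(t·b²))·r + (2/b)·m) > 0. Then λ₀ > (b·t + √(b²·t² + 4t))/(4·(n−1)). -/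
set_option maxHeartbeats 1600000

/-- Under the wall equation, sphericity, s > (n−1)r and the effectivity
inequality (with λ = √(1 + 2(n−1)bλ₀)), one has λ₀ > (bt + √(b²t² + 4t))/(4(n−1)). -/
theorem stmt_12 (n t a b : ℤ) (hn : 2 ≤ n) (ht : 2 ≤ t)
    (hnsq : ¬ ∃ k : ℤ, k ^ 2 = t * (n - 1))
    (ha : 0 < a) (hb : 0 < b)
    (hab : a ^ 2 - t * (n - 1) * b ^ 2 = -1)
    (hmin : ∀ a' b' : ℤ, 0 < a' → 0 < b' →
      a' ^ 2 - t * (n - 1) * b' ^ 2 = -1 → a ≤ a')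
    (r m s : ℤ) (lam₀ : ℝ) (hlam₀ : 0 ≤ lam₀)
    (lam : ℝ) (hlam : lam = Real.sqrt (1 + 2 * ((n : ℝ) - 1) * (b : ℝ) * lam₀))
    (hwall : (a : ℝ) * (((n : ℝ) - 1) * (r : ℝ) + (s : ℝ)) =
      -2 * ((n : ℝ) - 1) * ((b : ℝ) * (t : ℝ) + lam₀) * (m : ℝ))
    (hsph : r * s - t * m ^ 2 = 1)
    (hs : (n - 1) * r < s)
    (heff : (lam ^ 2 + 1) *
        (-(2 * (a : ℝ) / (b : ℝ)) * (m : ℝ) - (s : ℝ) +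
          ((lam ^ 2 - (a : ℝ) ^ 2) / ((t : ℝ) * (b : ℝ) ^ 2)) * (r : ℝ)) +
      2 * (a : ℝ) * lam ^ 2 *
        ((2 * (a : ℝ) / ((t : ℝ) * (b : ℝ) ^ 2)) * (r : ℝ) +
          (2 / (b : ℝ)) * (m : ℝ)) > 0) :
    lam₀ > ((b : ℝ) * (t : ℝ) + Real.sqrt ((b : ℝ) ^ 2 * (t : ℝ) ^ 2 + 4 * (t : ℝ))) /
      (4 * ((n : ℝ) - 1)) := by
  -- basic numeric facts
  have hn' : (2:ℝ) ≤ (n:ℝ) := by exact_mod_cast hn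
  have ht' : (2:ℝ) ≤ (t:ℝ) := by exact_mod_cast ht
  have ha' : (1:ℝ) ≤ (a:ℝ) := by exact_mod_cast ha
  have hb' : (1:ℝ) ≤ (b:ℝ) := by exact_mod_cast hb
  have hN : (1:ℝ) ≤ (n:ℝ) - 1 := by linarith
  have ha2R : (a:ℝ)^2 = (t:ℝ)*((n:ℝ)-1)*(b:ℝ)^2 - 1 := by
    have h := hab
    have h2 : ((a:ℝ))^2 - (t:ℝ)*((n:ℝ)-1)*(b:ℝ)^2 = -1 := by exact_mod_cast h
    linarith
  have hsphR : (r:ℝ)*(s:ℝ) - (t:ℝ)*(m:ℝ)^2 = 1 := by exact_mod_cast hsph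
  have hsR : ((n:ℝ)-1)*(r:ℝ) + 1 ≤ (s:ℝ) := by
    have h : (n-1)*r + 1 ≤ s := hs
    exact_mod_cast h
  have hLpos : (0:ℝ) < 1 + 2*((n:ℝ)-1)*(b:ℝ)*lam₀ := by
    nlinarith [mul_nonneg (mul_nonneg (show (0:ℝ) ≤ 2*((n:ℝ)-1) by linarith)
      (show (0:ℝ) ≤ (b:ℝ) by linarith)) hlam₀]
  have hl2 : lam^2 = 1 + 2*((n:ℝ)-1)*(b:ℝ)*lam₀ := by
    rw [hlam]; exact Real.sq_sqrt hLpos.le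
  -- step 1 : a*r + t*b*m > 0
  have hpos : (0:ℝ) < (a:ℝ)*((t:ℝ)*(b:ℝ)^2) := by
    have h1 : (0:ℝ) < (b:ℝ)^2 := by positivity
    nlinarith
  have h1 := mul_pos hpos heff
  have hId : (a:ℝ)*((t:ℝ)*(b:ℝ)^2) * ((lam ^ 2 + 1) *
        (-(2 * (a : ℝ) / (b : ℝ)) * (m : ℝ) - (s : ℝ) +
          ((lam ^ 2 - (a : ℝ) ^ 2) / ((t : ℝ) * (b : ℝ) ^ 2)) * (r : ℝ)) +
      2 * (a : ℝ) * lam ^ 2 *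
        ((2 * (a : ℝ) / ((t : ℝ) * (b : ℝ) ^ 2)) * (r : ℝ) +
          (2 / (b : ℝ)) * (m : ℝ))) =
      (4*((n:ℝ)-1)*(b:ℝ)^2*((t:ℝ)*(1+2*((n:ℝ)-1)*(b:ℝ)*lam₀) + ((n:ℝ)-1)*lam₀^2))
        * ((a:ℝ)*(r:ℝ) + (t:ℝ)*(b:ℝ)*(m:ℝ)) := by
    have hb0 : (b:ℝ) ≠ 0 := by linarith
    have ht0 : (t:ℝ) ≠ 0 := by linarith
    have hE : (a:ℝ)*((t:ℝ)*(b:ℝ)^2) * ((lam ^ 2 + 1) *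
          (-(2 * (a : ℝ) / (b : ℝ)) * (m : ℝ) - (s : ℝ) +
            ((lam ^ 2 - (a : ℝ) ^ 2) / ((t : ℝ) * (b : ℝ) ^ 2)) * (r : ℝ)) +
        2 * (a : ℝ) * lam ^ 2 *
          ((2 * (a : ℝ) / ((t : ℝ) * (b : ℝ) ^ 2)) * (r : ℝ) +
            (2 / (b : ℝ)) * (m : ℝ))) =
        (a:ℝ)*((lam^2 + 1)*(-(2*(a:ℝ)*(t:ℝ)*(b:ℝ))*(m:ℝ) - (t:ℝ)*(b:ℝ)^2*(s:ℝ)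
            + (lam^2 - (a:ℝ)^2)*(r:ℝ))
          + 2*(a:ℝ)*lam^2*(2*(a:ℝ)*(r:ℝ) + 2*(t:ℝ)*(b:ℝ)*(m:ℝ))) := by
      field_simp
    rw [hE]
    linear_combination (2*(a:ℝ)*(r:ℝ) + (a:ℝ)*(r:ℝ)*lam^2
        + 3*(a:ℝ)^3*(r:ℝ) + 2*(t:ℝ)*(b:ℝ)*(a:ℝ)^2*(m:ℝ) - (t:ℝ)*(b:ℝ)^2*(a:ℝ)*(s:ℝ)
        + 2*((n:ℝ)-1)*(b:ℝ)*lam₀*(a:ℝ)*(r:ℝ)) * hl2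
      + (-(2*(t:ℝ)*(b:ℝ)^2) - 2*((n:ℝ)-1)*(t:ℝ)*(b:ℝ)^3*lam₀) * hwall
      + (2*(a:ℝ)*(r:ℝ) + 6*((n:ℝ)-1)*(b:ℝ)*lam₀*(a:ℝ)*(r:ℝ)
        + 4*((n:ℝ)-1)*(t:ℝ)*(b:ℝ)^2*lam₀*(m:ℝ)) * ha2R
  rw [hId] at h1
  have hC1 : (0:ℝ) < 4*((n:ℝ)-1)*(b:ℝ)^2*((t:ℝ)*(1+2*((n:ℝ)-1)*(b:ℝ)*lam₀) + ((n:ℝ)-1)*lam₀^2) := by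
    have h2 : (0:ℝ) < (b:ℝ)^2 := by positivity
    have h3 : (0:ℝ) < (t:ℝ)*(1+2*((n:ℝ)-1)*(b:ℝ)*lam₀) :=
      mul_pos (by linarith) hLpos
    have h4 : (0:ℝ) ≤ ((n:ℝ)-1)*lam₀^2 :=
      mul_nonneg (by linarith) (sq_nonneg _)
    have h5 := mul_pos (mul_pos (show (0:ℝ) < 4*((n:ℝ)-1) by linarith) h2)
      (show (0:ℝ) < (t:ℝ)*(1+2*((n:ℝ)-1)*(b:ℝ)*lam₀) + ((n:ℝ)-1)*lam₀^2 by linarith)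
    nlinarith [h5]
  have key : (0:ℝ) < (a:ℝ)*(r:ℝ) + (t:ℝ)*(b:ℝ)*(m:ℝ) := by
    by_contra hk
    push_neg at hk
    nlinarith [mul_nonneg hC1.le (neg_nonneg.mpr hk)]
  clear heff h1 hId hC1 hpos hlam hnsq hmin hab hsph hs hl2 hLpos
  -- step 2 : a*(s - (n-1)*r) < -2*(n-1)*lam₀*m , and it is ≥ a ≥ 1
  have haD : (a:ℝ) ≤ (a:ℝ)*((s:ℝ) - ((n:ℝ)-1)*(r:ℝ)) := by nlinarith
  have hstep : (a:ℝ)*((s:ℝ) - ((n:ℝ)-1)*(r:ℝ)) < -2*((n:ℝ)-1)*lam₀*(m:ℝ) := by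
    nlinarith [mul_pos (show (0:ℝ) < 2*((n:ℝ)-1) by linarith) key]
  have hm : (m:ℝ) < 0 := by
    by_contra hm'
    push_neg at hm'
    nlinarith [mul_nonneg (mul_nonneg (show (0:ℝ) ≤ (n:ℝ)-1 by linarith) hlam₀) hm']
  have hm1 : (1:ℝ) ≤ (m:ℝ)^2 := by
    have hmz : m ≤ -1 := by
      have : (m:ℝ) < 0 := hm
      have h4 : m < 0 := by exact_mod_cast this
      omega
    have hmz' : (m:ℝ) ≤ -1 := by exact_mod_cast hmz
    nlinarith
  -- step 3 : squared inequality and the key identity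
  have hposD : (0:ℝ) < (a:ℝ)*((s:ℝ) - ((n:ℝ)-1)*(r:ℝ)) := by linarith
  have hsq : ((a:ℝ)*((s:ℝ)-((n:ℝ)-1)*(r:ℝ)))^2 < (-2*((n:ℝ)-1)*lam₀*(m:ℝ))^2 := by
    nlinarith [mul_self_lt_mul_self hposD.le hstep]
  have hkey2 : (a:ℝ)^2*((s:ℝ)-((n:ℝ)-1)*(r:ℝ))^2 =
      4*((n:ℝ)-1)^2*((b:ℝ)*(t:ℝ)+lam₀)^2*(m:ℝ)^2
        - 4*((n:ℝ)-1)*(a:ℝ)^2*(1+(t:ℝ)*(m:ℝ)^2) := by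
    linear_combination ((a:ℝ)*(((n:ℝ)-1)*(r:ℝ)+(s:ℝ))
        - 2*((n:ℝ)-1)*((b:ℝ)*(t:ℝ)+lam₀)*(m:ℝ)) * hwall
      - 4*((n:ℝ)-1)*(a:ℝ)^2 * hsphR
  clear hwall key hstep
  have e2 : 4*((n:ℝ)-1)^2*((b:ℝ)*(t:ℝ)+lam₀)^2*(m:ℝ)^2
        - 4*((n:ℝ)-1)*(a:ℝ)^2*(1+(t:ℝ)*(m:ℝ)^2)
      = 4*((n:ℝ)-1)*((t:ℝ)*(1+2*((n:ℝ)-1)*(b:ℝ)*lam₀)*(m:ℝ)^2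
        + ((n:ℝ)-1)*lam₀^2*(m:ℝ)^2 - (a:ℝ)^2) := by
    linear_combination (-(4*((n:ℝ)-1)*(t:ℝ)*(m:ℝ)^2)) * ha2R
  -- (A) : t*(1+2(n-1)b lam₀)*m^2 < a^2
  have hA : (t:ℝ)*(1+2*((n:ℝ)-1)*(b:ℝ)*lam₀)*(m:ℝ)^2 < (a:ℝ)^2 := by
    have h5 : 4*((n:ℝ)-1)*((t:ℝ)*(1+2*((n:ℝ)-1)*(b:ℝ)*lam₀)*(m:ℝ)^2
        + ((n:ℝ)-1)*lam₀^2*(m:ℝ)^2 - (a:ℝ)^2) < 4*((n:ℝ)-1)^2*lam₀^2*(m:ℝ)^2 := by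
      nlinarith [hsq, hkey2, e2]
    by_contra hq
    push_neg at hq
    have h6 : (0:ℝ) ≤ ((n:ℝ)-1-1) *
        ((t:ℝ)*(1+2*((n:ℝ)-1)*(b:ℝ)*lam₀)*(m:ℝ)^2 - (a:ℝ)^2) :=
      mul_nonneg (by linarith) (by linarith)
    linarith [h5, h6]
  -- (B) : (4(n-1)+1)*a^2 ≤ 4(n-1)*( t*L*m^2 + (n-1)*lam₀^2*m^2 )
  have hD1 : (1:ℝ) ≤ (s:ℝ) - ((n:ℝ)-1)*(r:ℝ) := by linarith
  have hD2 : (1:ℝ) ≤ ((s:ℝ) - ((n:ℝ)-1)*(r:ℝ))^2 := by nlinarith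
  have hB : (4*((n:ℝ)-1)+1)*(a:ℝ)^2
      ≤ 4*((n:ℝ)-1)*((t:ℝ)*(1+2*((n:ℝ)-1)*(b:ℝ)*lam₀)*(m:ℝ)^2
        + ((n:ℝ)-1)*lam₀^2*(m:ℝ)^2) := by
    have h6 : (a:ℝ)^2 ≤ (a:ℝ)^2*((s:ℝ)-((n:ℝ)-1)*(r:ℝ))^2 := by
      nlinarith [mul_nonneg (sq_nonneg (a:ℝ)) (show (0:ℝ) ≤ ((s:ℝ)-((n:ℝ)-1)*(r:ℝ))^2 - 1 by linarith)]
    nlinarith [hkey2, e2]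
  -- combine : t*(1+2(n-1)b lam₀) < 4(n-1)^2 lam₀^2
  have hquad : (t:ℝ)*(1+2*((n:ℝ)-1)*(b:ℝ)*lam₀) < 4*((n:ℝ)-1)^2*lam₀^2 := by
    by_contra hq
    push_neg at hq
    nlinarith [hA, hB, hm1,
      mul_le_mul_of_nonneg_right hq (sq_nonneg (m:ℝ)),
      mul_pos (show (0:ℝ) < 4*((n:ℝ)-1)+1 by linarith)
        (show (0:ℝ) < (a:ℝ)^2 - (t:ℝ)*(1+2*((n:ℝ)-1)*(b:ℝ)*lam₀)*(m:ℝ)^2 by linarith)]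
  -- final quadratic analysis
  have hS2 : (Real.sqrt ((b:ℝ)^2*(t:ℝ)^2 + 4*(t:ℝ)))^2 = (b:ℝ)^2*(t:ℝ)^2 + 4*(t:ℝ) := by
    apply Real.sq_sqrt
    nlinarith
  have hS0 : (0:ℝ) ≤ Real.sqrt ((b:ℝ)^2*(t:ℝ)^2 + 4*(t:ℝ)) := Real.sqrt_nonneg _
  set S := Real.sqrt ((b:ℝ)^2*(t:ℝ)^2 + 4*(t:ℝ)) with hSdef
  have hStb : (b:ℝ)*(t:ℝ) ≤ S := by
    nlinarith [hS2, hS0]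
  rw [gt_iff_lt, div_lt_iff₀ (show (0:ℝ) < 4*((n:ℝ)-1) by linarith)]
  by_contra hq
  push_neg at hq
  have hx0 : (0:ℝ) ≤ lam₀ * (4*((n:ℝ)-1)) := by
    apply mul_nonneg hlam₀; linarith
  have h7 : (0:ℝ) ≤ S - (lam₀*(4*((n:ℝ)-1)) - (b:ℝ)*(t:ℝ)) := by linarith
  have h8 : (0:ℝ) ≤ S + (lam₀*(4*((n:ℝ)-1)) - (b:ℝ)*(t:ℝ)) := by linarith
  nlinarith [mul_nonneg h7 h8, hquad, hS2]
end

section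
/- Let λ₀ ≥ 0 be a real number and let r, m, s be integers with m ≠ 0 satisfying the wall equation a·((n−1)·r + s) = −2·(n−1)·(b·t + λ₀)·m. Then (2a² + 1)·|m| < a·b·|(n−1)·r + s|. Equivalently, if integers r, m, s with m ≠ 0 satisfy the wall equation and (2a² + 1)·|m| ≥ a·b·|(n−1)·r + s|, then λ₀ ≤ −1/(2(n−1)b) < 0, contradicting λ₀ ≥ 0. -/
/-- If λ₀ ≥ 0 and integers r, m, s with m ≠ 0 satisfy the wall
equation, then (2a² + 1)·|m| < a·b·|(n−1)·r + s|. -/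
theorem stmt_13 (n t a b : ℤ) (hn : 2 ≤ n) (ht : 2 ≤ t)
    (hnsq : ¬ ∃ k : ℤ, k ^ 2 = t * (n - 1))
    (ha : 0 < a) (hb : 0 < b)
    (hab : a ^ 2 - t * (n - 1) * b ^ 2 = -1)
    (hmin : ∀ a' b' : ℤ, 0 < a' → 0 < b' →
      a' ^ 2 - t * (n - 1) * b' ^ 2 = -1 → a ≤ a')
    (lam₀ : ℝ) (hlam₀ : 0 ≤ lam₀)
    (r m s : ℤ) (hm : m ≠ 0)
    (hwall : (a : ℝ) * (((n : ℝ) - 1) * (r : ℝ) + (s : ℝ)) =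
      -2 * ((n : ℝ) - 1) * ((b : ℝ) * (t : ℝ) + lam₀) * (m : ℝ)) :
    (2 * a ^ 2 + 1) * |m| < a * b * |(n - 1) * r + s| := by
  have hn1 : (1 : ℝ) ≤ (n : ℝ) - 1 := by
    have : (2 : ℝ) ≤ (n : ℝ) := by exact_mod_cast hn
    linarith
  have hbR : (1 : ℝ) ≤ (b : ℝ) := by exact_mod_cast hb
  have htR : (2 : ℝ) ≤ (t : ℝ) := by exact_mod_cast ht
  have haR : (0 : ℝ) < (a : ℝ) := by exact_mod_cast ha
  have hbt : (0 : ℝ) < (b : ℝ) * (t : ℝ) + lam₀ := by nlinarith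
  have hpos : (0 : ℝ) < 2 * ((n : ℝ) - 1) * ((b : ℝ) * (t : ℝ) + lam₀) := by
    nlinarith
  set K : ℤ := (n - 1) * r + s with hKdef
  have hcast : ((K : ℤ) : ℝ) = ((n : ℝ) - 1) * (r : ℝ) + (s : ℝ) := by
    push_cast [hKdef]; ring
  have h1 : (a : ℝ) * |(K : ℝ)| = 2 * ((n : ℝ) - 1) * ((b : ℝ) * (t : ℝ) + lam₀) * |(m : ℝ)| := by
    have h := congrArg abs hwall
    rw [abs_mul] at h
    rw [abs_of_pos haR] at h
    rw [← hcast] at h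
    rw [h]
    have : -2 * ((n : ℝ) - 1) * ((b : ℝ) * (t : ℝ) + lam₀) * (m : ℝ)
        = -(2 * ((n : ℝ) - 1) * ((b : ℝ) * (t : ℝ) + lam₀)) * (m : ℝ) := by ring
    rw [this, abs_mul, abs_neg, abs_of_pos hpos]
  have hmR : (1 : ℝ) ≤ |(m : ℝ)| := by
    have : (1 : ℤ) ≤ |m| := Int.one_le_abs hm
    calc (1 : ℝ) ≤ (|m| : ℤ) := by exact_mod_cast this
    _ = |(m : ℝ)| := by push_cast; ring
  have hpell : (a : ℝ) ^ 2 + 1 = (t : ℝ) * ((n : ℝ) - 1) * (b : ℝ) ^ 2 := by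
    have : (a : ℤ) ^ 2 + 1 = t * (n - 1) * b ^ 2 := by linarith
    exact_mod_cast this
  -- a*b*|K| ≥ 2(n-1)b²t|m| = 2(a²+1)|m| > (2a²+1)|m|
  have hgoal : ((2 * a ^ 2 + 1 : ℤ) : ℝ) * |(m : ℝ)| < (a : ℝ) * (b : ℝ) * |(K : ℝ)| := by
    have h2 : (a : ℝ) * (b : ℝ) * |(K : ℝ)|
        = 2 * ((n : ℝ) - 1) * ((b : ℝ) * (t : ℝ) + lam₀) * |(m : ℝ)| * (b : ℝ) := by
      rw [← h1]; ring
    push_cast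
    rw [h2]
    have hmpos : (0 : ℝ) < |(m : ℝ)| := by linarith
    have hlb : (0 : ℝ) ≤ ((n : ℝ) - 1) * lam₀ * (b : ℝ) := by
      apply mul_nonneg (mul_nonneg (by linarith) hlam₀) (by linarith)
    have hstep : 2 * ((a : ℝ) ^ 2 + 1) ≤ 2 * ((n : ℝ) - 1) * ((b : ℝ) * (t : ℝ) + lam₀) * (b : ℝ) := by
      nlinarith [hpell, hlb]
    nlinarith [mul_le_mul_of_nonneg_right hstep (abs_nonneg (m : ℝ)), hmpos]
  exact_mod_cast hgoal
end

section
/- For every real number λ ≥ 1 and every (r, m, s) ∈ ℤ³, the complex numbers Z_λ(r, m, s) and Z_λ(1, 0, 1−n) are ℝ-linearly dependent — that is, Im(Z_λ(r, m, s)·conj(Z_λ(1, 0, 1−n))) = 0 — if and only if (2·(n−1)·b²·t + λ² − 1)·m + a·b·((n−1)·r + s) = 0. -/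
/-- For λ ≥ 1 and (r,m,s) ∈ ℤ³, the complex numbers Z_λ(r,m,s) and
Z_λ(1,0,1−n) are ℝ-linearly dependent, i.e. Im(Z_λ(r,m,s)·conj(Z_λ(1,0,1−n))) = 0,
iff (2(n−1)b²t + λ² − 1)·m + ab·((n−1)r + s) = 0. -/
theorem stmt_14 (n t a b : ℤ) (hn : 2 ≤ n) (ht : 2 ≤ t)
    (hnsq : ¬ ∃ k : ℤ, k ^ 2 = t * (n - 1))
    (ha : 0 < a) (hb : 0 < b)
    (hab : a ^ 2 - t * (n - 1) * b ^ 2 = -1)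
    (hmin : ∀ a' b' : ℤ, 0 < a' → 0 < b' →
      a' ^ 2 - t * (n - 1) * b' ^ 2 = -1 → a ≤ a')
    (lam : ℝ) (hlam : 1 ≤ lam)
    (Z : ℤ → ℤ → ℤ → ℂ)
    (hZ : Z = fun (r m s : ℤ) =>
      ((-(2 * (a : ℝ) / (b : ℝ)) * (m : ℝ) - (s : ℝ) +
        ((lam ^ 2 - (a : ℝ) ^ 2) / ((t : ℝ) * (b : ℝ) ^ 2)) * (r : ℝ) : ℝ) : ℂ) +
      ((lam * ((2 * (a : ℝ) / ((t : ℝ) * (b : ℝ) ^ 2)) * (r : ℝ) +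
        (2 / (b : ℝ)) * (m : ℝ)) : ℝ) : ℂ) * Complex.I)
    (r m s : ℤ) :
    (Z r m s * (starRingEnd ℂ) (Z 1 0 (1 - n))).im = 0 ↔
      (2 * ((n : ℝ) - 1) * (b : ℝ) ^ 2 * (t : ℝ) + lam ^ 2 - 1) * (m : ℝ) +
        (a : ℝ) * (b : ℝ) * (((n : ℝ) - 1) * (r : ℝ) + (s : ℝ)) = 0 := by
  have hb' : (b : ℝ) ≠ 0 := by exact_mod_cast hb.ne'
  have ht' : (t : ℝ) ≠ 0 := by
    have : (0:ℤ) < t := by omega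
    exact_mod_cast this.ne'
  have hlam' : lam ≠ 0 := by linarith
  have ha2 : (a : ℝ) ^ 2 = (t : ℝ) * ((n : ℝ) - 1) * (b : ℝ) ^ 2 - 1 := by
    have h := congrArg (fun x : ℤ => (x : ℝ)) hab
    push_cast at h
    linarith
  have key : (Z r m s * (starRingEnd ℂ) (Z 1 0 (1 - n))).im =
      (2 * lam / ((t : ℝ) * (b : ℝ) ^ 3)) *
      ((2 * ((n : ℝ) - 1) * (b : ℝ) ^ 2 * (t : ℝ) + lam ^ 2 - 1) * (m : ℝ) +
        (a : ℝ) * (b : ℝ) * (((n : ℝ) - 1) * (r : ℝ) + (s : ℝ))) := by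
    subst hZ
    simp only [Complex.mul_im, Complex.add_re, Complex.add_im, Complex.ofReal_re,
      Complex.ofReal_im, Complex.mul_re, Complex.I_re, Complex.I_im,
      Complex.conj_re, Complex.conj_im]
    push_cast
    field_simp
    linear_combination ((m : ℝ) * (b : ℝ) * (t : ℝ) * lam * 2) * ha2
  rw [key, mul_eq_zero]
  have hc : 2 * lam / ((t : ℝ) * (b : ℝ) ^ 3) ≠ 0 := by
    apply div_ne_zero (by positivity)
    exact mul_ne_zero ht' (pow_ne_zero _ hb')
  constructor
  · rintro (h | h)
    · exact absurd h hc
    · exact h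
  · intro h; exact Or.inr h
end
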